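/- arXiv:2405.20066 — 5 statements merged into one kernel-verified Lean document; each statement's English description precedes it below -/
import Mathlib

section
/- Let T, T' ⊆ ℝ^D be linear subspaces with dim T = d ≥ d' = dim T', and let θ_1 ≤ … ≤ θ_d be the principal angles between T and T' (with θ_k = π/2 for k > d'). For all h_∥ ≥ h_⊥ > 0, the d-dimensional Hausdorff measure of T ∩ S_{T'}(0, h_∥, h_⊥) is at most 4^d ∏_{k=1}^d min{ h_∥ , h_⊥ / sin θ_k }, with the convention h_⊥/sin 0 = +∞. -/
/-!
Diagonalising `A Aᵀ` yields an orthonormal basis `e` of `T` of principal vectors: writing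
`z = ∑ c j • e j`, the projection of `z` onto `T'` has squared norm `∑ cos² θ_j c_j²` and the
projection onto `T'ᗮ` has squared norm `∑ sin² θ_j c_j²`. A point of `T` in the slab thus satisfies
`∑ cos² θ_j c_j² ≤ h∥²` and `∑ sin² θ_j c_j² ≤ h⊥²`; adding these after dividing by `h∥²` and
`h⊥²` places `c` in an ellipsoid whose `j`-th semi-axis is at most `2 min(h∥, h⊥ / sin θ_j)`.
An ellipsoid is a linear image of the unit ball, so its `d`-dimensional Hausdorff measure is the
product of the semi-axes times that of the unit ball. For the unnormalised `μH[d]` the latter is at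
most `2^d`: cover the ball by small balls of total Lebesgue measure close to its own (Besicovitch),
and compare `diam^d = (2r)^d` with the Lebesgue measure of each ball.
-/

open scoped RealInnerProductSpace MeasureTheory ENNReal

noncomputable section

/-- The slab `S_{T'}(x, h∥, h⊥) := x + B_{T'}(0,h∥) + B_{T'ᗮ}(0,h⊥)`. -/
def slab {D : ℕ} (T' : Submodule ℝ (EuclideanSpace ℝ (Fin D)))
    (x : EuclideanSpace ℝ (Fin D)) (hpar hperp : ℝ) :
    Set (EuclideanSpace ℝ (Fin D)) :=
  {z | ∃ a ∈ T', ∃ b ∈ T'ᗮ, ‖a‖ ≤ hpar ∧ ‖b‖ ≤ hperp ∧ z = x + a + b}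

open MeasureTheory Metric Module Filter Set
open scoped Matrix

section HausdorffMeasureBall

variable {E : Type*} [NormedAddCommGroup E] [NormedSpace ℝ E] [FiniteDimensional ℝ E]
  [MeasurableSpace E] [BorelSpace E] (μ : Measure E) [μ.IsAddHaarMeasure]

theorem two_pow_div_mul_addHaar_closedBall (x : E) {r : ℝ} (hr : 0 ≤ r) :
    2 ^ finrank ℝ E / μ (ball 0 1) * μ (closedBall x r) =
      (2 * ENNReal.ofReal r) ^ finrank ℝ E := by
  rw [Measure.addHaar_closedBall μ x hr, mul_left_comm,
    ENNReal.div_mul_cancel (measure_ball_pos μ 0 one_pos).ne' measure_ball_lt_top.ne,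
    ENNReal.ofReal_pow hr, mul_pow, mul_comm]

theorem ediam_closedBall_pow_le (x : E) {r : ℝ} (hr : 0 ≤ r) :
    ediam (closedBall x r) ^ (finrank ℝ E : ℝ) ≤
      2 ^ finrank ℝ E / μ (ball 0 1) * μ (closedBall x r) := by
  rw [two_pow_div_mul_addHaar_closedBall μ x hr, ENNReal.rpow_natCast, ← closedEBall_ofReal hr]
  gcongr
  exact ediam_closedEBall_le

theorem hausdorffMeasure_le_mul_add (s : Set E) {ε : ℝ≥0∞} (hε : ε ≠ 0) :
    μH[finrank ℝ E] s ≤ 2 ^ finrank ℝ E / μ (ball 0 1) * (μ s + ε) := by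
  set C := 2 ^ finrank ℝ E / μ (ball 0 1)
  have hcover (n : ℕ) : ∃ (t : Set E) (r : E → ℝ), t.Countable ∧
      (∀ x ∈ t, r x ∈ Ioo (0 : ℝ) (1 / (n + 1))) ∧ s ⊆ (⋃ x ∈ t, closedBall x (r x)) ∧
      ∑' x : t, μ (closedBall x (r x)) ≤ μ s + ε := by
    obtain ⟨t, r, ht, -, hr, hst, hsum⟩ :=
      Besicovitch.exists_closedBall_covering_tsum_measure_le μ hε
        (fun _ => Ioo (0 : ℝ) (1 / (n + 1))) s fun _ _ δ hδ => by
          rw [Ioo_inter_Ioo, max_self]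
          exact nonempty_Ioo.2 (lt_min (by positivity) hδ)
    exact ⟨t, r, ht, hr, hst, hsum⟩
  choose t r ht hr hst hsum using hcover
  have := fun n => (ht n).to_subtype
  refine (Measure.hausdorffMeasure_le_liminf_tsum _ s (l := atTop)
    (fun n : ℕ => ENNReal.ofReal (2 * (1 / (n + 1)))) ?_
    (fun n (x : t n) => closedBall (x : E) (r n x)) (Eventually.of_forall fun n x => ?_)
    (Eventually.of_forall fun n => by simpa only [biUnion_eq_iUnion] using hst n)).trans
    (liminf_le_of_frequently_le' (Frequently.of_forall fun n => ?_))
  · simpa using ENNReal.tendsto_ofReal (tendsto_one_div_add_atTop_nhds_zero_nat.const_mul 2)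
  · have hrx := hr n x x.2
    rw [← closedEBall_ofReal hrx.1.le, ENNReal.ofReal_mul zero_le_two, ENNReal.ofReal_ofNat]
    exact ediam_closedEBall_le.trans (by gcongr; exact hrx.2.le)
  · calc ∑' x : t n, ediam (closedBall (x : E) (r n x)) ^ (finrank ℝ E : ℝ)
        ≤ ∑' x : t n, C * μ (closedBall (x : E) (r n x)) :=
          ENNReal.tsum_le_tsum fun x => ediam_closedBall_pow_le μ _ (hr n x x.2).1.le
      _ ≤ C * (μ s + ε) := by rw [ENNReal.tsum_mul_left]; gcongr; exact hsum n

theorem hausdorffMeasure_le_mul_addHaar (s : Set E) :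
    μH[finrank ℝ E] s ≤ 2 ^ finrank ℝ E / μ (ball 0 1) * μ s := by
  set C := 2 ^ finrank ℝ E / μ (ball 0 1)
  have hC0 : C ≠ 0 := ENNReal.div_ne_zero.2 ⟨by simp, measure_ball_lt_top.ne⟩
  have hCtop : C ≠ ⊤ := ENNReal.div_ne_top (by simp) (measure_ball_pos μ 0 one_pos).ne'
  refine ENNReal.le_of_forall_pos_le_add fun ε hε _ => ?_
  calc μH[finrank ℝ E] s ≤ C * (μ s + ε / C) :=
        hausdorffMeasure_le_mul_add μ s (ENNReal.div_ne_zero.2 ⟨by simpa using hε.ne', hCtop⟩)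
    _ = C * μ s + ε := by rw [mul_add, ENNReal.mul_div_cancel hC0 hCtop]

theorem hausdorffMeasure_closedBall_le (x : E) {r : ℝ} (hr : 0 ≤ r) :
    μH[finrank ℝ E] (closedBall x r) ≤ (2 * ENNReal.ofReal r) ^ finrank ℝ E :=
  (hausdorffMeasure_le_mul_addHaar Measure.addHaar _).trans_eq
    (two_pow_div_mul_addHaar_closedBall _ x hr)

end HausdorffMeasureBall

section Ellipsoid

variable {ι V : Type*} [Fintype ι] [NormedAddCommGroup V] [InnerProductSpace ℝ V]

def ellipsoid (e : ι → V) (r : ι → ℝ) : Set V :=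
  {z | ∃ c : ι → ℝ, ∑ j, (c j / r j) ^ 2 ≤ 1 ∧ ∑ j, c j • e j = z}

def euclideanLinearCombination (w : ι → V) : EuclideanSpace ℝ ι →ₗ[ℝ] V :=
  Fintype.linearCombination ℝ w ∘ₗ (WithLp.linearEquiv 2 ℝ (ι → ℝ)).toLinearMap

theorem euclideanLinearCombination_apply (w : ι → V) (y : EuclideanSpace ℝ ι) :
    euclideanLinearCombination w y = ∑ j, y j • w j := by
  simp [euclideanLinearCombination, Fintype.linearCombination_apply]

theorem normDet_euclideanLinearCombination_smul {e : ι → V} (he : Orthonormal ℝ e)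
    {r : ι → ℝ} (hr : ∀ j, 0 ≤ r j) :
    (euclideanLinearCombination fun j => r j • e j).normDet = ∏ j, r j := by
  classical
  have hsq := (euclideanLinearCombination fun j => r j • e j).normDet_sq_eq_det_gram
    (EuclideanSpace.basisFun ι ℝ)
  have hgram : Matrix.gram ℝ (fun j => (euclideanLinearCombination fun j => r j • e j)
      (EuclideanSpace.basisFun ι ℝ j)) = Matrix.diagonal fun j => r j ^ 2 := by
    ext i j
    simp [Matrix.gram, euclideanLinearCombination_apply, inner_smul_left, inner_smul_right,
      orthonormal_iff_ite.1 he, Matrix.diagonal_apply, sq]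
    split_ifs with hij <;> simp [hij]
  rw [hgram, Matrix.det_diagonal, Finset.prod_pow] at hsq
  exact (pow_left_inj₀ (LinearMap.normDet_nonneg _) (Finset.prod_nonneg fun j _ => hr j)
    two_ne_zero).1 (by exact_mod_cast hsq)

theorem hausdorffMeasure_ellipsoid_le [MeasurableSpace V] [BorelSpace V] {e : ι → V}
    (he : Orthonormal ℝ e) {r : ι → ℝ} (hr : ∀ j, 0 < r j) :
    μH[Fintype.card ι] (ellipsoid e r) ≤ 2 ^ Fintype.card ι * ∏ j, ENNReal.ofReal (r j) := by
  set G := euclideanLinearCombination fun j => r j • e j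
  have hsub : ellipsoid e r ⊆ G '' closedBall 0 1 := by
    rintro _ ⟨c, hc, rfl⟩
    refine ⟨WithLp.toLp 2 fun j => c j / r j, ?_, ?_⟩
    · simp only [mem_closedBall_zero_iff, EuclideanSpace.norm_eq, Real.norm_eq_abs, sq_abs]
      exact Real.sqrt_le_one.2 hc
    · simp only [G, euclideanLinearCombination_apply, smul_smul]
      exact Finset.sum_congr rfl fun j _ => by rw [div_mul_cancel₀ _ (hr j).ne']
  calc μH[Fintype.card ι] (ellipsoid e r)
      ≤ μH[finrank ℝ (EuclideanSpace ℝ ι)] (G '' closedBall 0 1) := by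
        rw [finrank_euclideanSpace]; exact measure_mono hsub
    _ = ENNReal.ofReal (∏ j, r j) *
          μH[finrank ℝ (EuclideanSpace ℝ ι)] (closedBall (0 : EuclideanSpace ℝ ι) 1) := by
        rw [LinearMap.hausdorffMeasure_image,
          normDet_euclideanLinearCombination_smul he fun j => (hr j).le]
    _ ≤ ENNReal.ofReal (∏ j, r j) * 2 ^ Fintype.card ι := by
        gcongr
        simpa [finrank_euclideanSpace] using
          hausdorffMeasure_closedBall_le (0 : EuclideanSpace ℝ ι) zero_le_one
    _ = 2 ^ Fintype.card ι * ∏ j, ENNReal.ofReal (r j) := by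
        rw [ENNReal.ofReal_prod_of_nonneg fun j _ => (hr j).le, mul_comm]

end Ellipsoid

section PrincipalVectors

variable {ι κ E : Type*} [Fintype κ] [NormedAddCommGroup E] [InnerProductSpace ℝ E]

/-- For orthonormal `u'` and `e`, the condition `(crossGram u' e)ᵀ * crossGram u' e = diagonal ν`
says that the `e j` are principal vectors of `span e` relative to `span u'`, with
`ν j = cos² θ_j`. -/
def crossGram (u' : κ → E) (e : ι → E) : Matrix κ ι ℝ :=
  Matrix.of fun m j => ⟪u' m, e j⟫

theorem Orthonormal.sum_smul_of_mem_unitaryGroup [Fintype ι] [DecidableEq ι] {u : ι → E}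
    (hu : Orthonormal ℝ u) {W : Matrix ι ι ℝ} (hW : W ∈ Matrix.unitaryGroup ι ℝ) :
    Orthonormal ℝ fun j => ∑ i, W i j • u i := by
  rw [orthonormal_iff_ite]
  intro j l
  rw [hu.inner_sum, ← Matrix.one_apply, ← Matrix.mem_unitaryGroup_iff'.1 hW, Matrix.mul_apply]
  simp

theorem crossGram_sum_smul_eq_diagonal [Fintype ι] [DecidableEq ι] {u : ι → E} {u' : κ → E}
    {A : Matrix ι κ ℝ} (hA : ∀ i m, A i m = ⟪u i, u' m⟫) {W : Matrix ι ι ℝ} {ν : ι → ℝ}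
    (hW : Wᵀ * (A * Aᵀ) * W = Matrix.diagonal ν) :
    (crossGram u' fun j => ∑ i, W i j • u i)ᵀ * crossGram u' (fun j => ∑ i, W i j • u i) =
      Matrix.diagonal ν := by
  have hB : crossGram u' (fun j => ∑ i, W i j • u i) = Aᵀ * W := by
    ext m j
    simp [crossGram, Matrix.mul_apply, inner_sum, inner_smul_right, hA, real_inner_comm, mul_comm]
  rw [hB, Matrix.transpose_mul, Matrix.transpose_transpose, ← Matrix.mul_assoc,
    Matrix.mul_assoc Wᵀ, hW]

theorem Orthonormal.norm_sum_smul_sq [Fintype ι] {e : ι → E} (he : Orthonormal ℝ e)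
    (c : ι → ℝ) : ‖∑ j, c j • e j‖ ^ 2 = ∑ j, c j ^ 2 := by
  rw [← real_inner_self_eq_norm_sq, he.inner_sum]
  simp [sq]

theorem Orthonormal.sum_inner_sq_add_of_mem_span {u' : κ → E} (hu' : Orthonormal ℝ u')
    {a b : E} (ha : a ∈ Submodule.span ℝ (range u'))
    (hb : b ∈ (Submodule.span ℝ (range u'))ᗮ) :
    ∑ m, ⟪u' m, a + b⟫ ^ 2 = ‖a‖ ^ 2 := by
  classical
  obtain ⟨l, rfl⟩ := (Submodule.mem_span_range_iff_exists_fun ℝ).1 ha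
  simp_rw [inner_add_right, Submodule.inner_right_of_mem_orthogonal
    (Submodule.subset_span (mem_range_self _)) hb, add_zero, hu'.inner_right_fintype,
    hu'.norm_sum_smul_sq]

theorem sum_inner_sq_sum_smul [Fintype ι] [DecidableEq ι] {e : ι → E} {u' : κ → E}
    {ν : ι → ℝ} (hdiag : (crossGram u' e)ᵀ * crossGram u' e = Matrix.diagonal ν) (c : ι → ℝ) :
    ∑ m, ⟪u' m, ∑ j, c j • e j⟫ ^ 2 = ∑ j, ν j * c j ^ 2 := by
  set B := crossGram u' e
  have hBc : (fun m => ⟪u' m, ∑ j, c j • e j⟫) = B *ᵥ c := by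
    ext m
    simp [B, crossGram, Matrix.mulVec, dotProduct, inner_sum, inner_smul_right, mul_comm]
  calc ∑ m, ⟪u' m, ∑ j, c j • e j⟫ ^ 2 = (B *ᵥ c) ⬝ᵥ (B *ᵥ c) := by
        rw [← hBc]; simp [dotProduct, sq]
    _ = (Matrix.diagonal ν *ᵥ c) ⬝ᵥ c := by
        rw [← hdiag, ← Matrix.mulVec_mulVec, Matrix.mulVec_transpose, ← Matrix.dotProduct_mulVec]
    _ = ∑ j, ν j * c j ^ 2 := by simp [dotProduct, Matrix.mulVec_diagonal, sq, mul_assoc]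

theorem mem_Icc_of_crossGram_eq_diagonal [DecidableEq ι] {e : ι → E} (he : Orthonormal ℝ e)
    {u' : κ → E} (hu' : Orthonormal ℝ u') {ν : ι → ℝ}
    (hdiag : (crossGram u' e)ᵀ * crossGram u' e = Matrix.diagonal ν) (j : ι) :
    ν j ∈ Icc 0 1 := by
  have hν : ν j = ∑ m, ‖⟪u' m, e j⟫‖ ^ 2 := by
    simpa [crossGram, Matrix.mul_apply, sq] using (congrFun (congrFun hdiag j) j).symm
  refine ⟨hν ▸ by positivity, ?_⟩
  calc ν j = ∑ m, ‖⟪u' m, e j⟫‖ ^ 2 := hν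
    _ ≤ ‖e j‖ ^ 2 := hu'.sum_inner_products_le _
    _ = 1 := by rw [he.1 j, one_pow]

end PrincipalVectors

theorem sum_mul_sq_le_of_sum_smul_mem_slab {ι κ : Type*} [Fintype ι] [Fintype κ] [DecidableEq ι]
    {D : ℕ} {e : ι → EuclideanSpace ℝ (Fin D)} (he : Orthonormal ℝ e)
    {u' : κ → EuclideanSpace ℝ (Fin D)} (hu' : Orthonormal ℝ u') {ν : ι → ℝ}
    (hdiag : (crossGram u' e)ᵀ * crossGram u' e = Matrix.diagonal ν) {c : ι → ℝ}
    {hpar hperp : ℝ} (hz : ∑ j, c j • e j ∈ slab (Submodule.span ℝ (range u')) 0 hpar hperp) :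
    ∑ j, ν j * c j ^ 2 ≤ hpar ^ 2 ∧ ∑ j, (1 - ν j) * c j ^ 2 ≤ hperp ^ 2 := by
  obtain ⟨a, ha, b, hb, hna, hnb, hz⟩ := hz
  rw [zero_add] at hz
  have hpar_part : ∑ j, ν j * c j ^ 2 = ‖a‖ ^ 2 := by
    rw [← sum_inner_sq_sum_smul hdiag, hz, hu'.sum_inner_sq_add_of_mem_span ha hb]
  have hnorm : ∑ j, c j ^ 2 = ‖a‖ ^ 2 + ‖b‖ ^ 2 := by
    rw [← he.norm_sum_smul_sq, hz, norm_add_sq_real,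
      Submodule.inner_right_of_mem_orthogonal ha hb, mul_zero, add_zero]
  have hperp_part : ∑ j, (1 - ν j) * c j ^ 2 = ‖b‖ ^ 2 := by
    simp only [sub_mul, one_mul, Finset.sum_sub_distrib, hnorm, hpar_part, add_sub_cancel_left]
  rw [hpar_part, hperp_part]
  exact ⟨pow_le_pow_left₀ (norm_nonneg a) hna 2, pow_le_pow_left₀ (norm_nonneg b) hnb 2⟩

section SlabSemiAxis

variable {hpar hperp : ℝ}

/-- Adding the slab constraints `∑ ν c² ≤ h∥²` and `∑ (1 - ν) c² ≤ h⊥²` after dividing them by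
`h∥²` and `h⊥²` gives `∑ slabWeight h∥ h⊥ ν_j c_j² ≤ 2`, an ellipsoid with semi-axes
`slabSemiAxis h∥ h⊥ ν_j`. -/
def slabWeight (hpar hperp ν : ℝ) : ℝ := ν / hpar ^ 2 + (1 - ν) / hperp ^ 2

def slabSemiAxis (hpar hperp ν : ℝ) : ℝ := √(2 / slabWeight hpar hperp ν)

theorem one_div_sq_le_slabWeight (hperp0 : 0 < hperp) (hpp : hperp ≤ hpar) {ν : ℝ}
    (hν : ν ≤ 1) : 1 / hpar ^ 2 ≤ slabWeight hpar hperp ν := by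
  have : (1 - ν) / hpar ^ 2 ≤ (1 - ν) / hperp ^ 2 :=
    div_le_div_of_nonneg_left (by linarith) (by positivity) (by gcongr)
  rw [slabWeight]
  linarith [show 1 / hpar ^ 2 = ν / hpar ^ 2 + (1 - ν) / hpar ^ 2 by ring]

theorem slabWeight_pos (hperp0 : 0 < hperp) (hpp : hperp ≤ hpar) {ν : ℝ} (hν : ν ≤ 1) :
    0 < slabWeight hpar hperp ν :=
  (one_div_pos.2 (pow_pos (hperp0.trans_le hpp) 2)).trans_le
    (one_div_sq_le_slabWeight hperp0 hpp hν)

theorem slabSemiAxis_pos (hperp0 : 0 < hperp) (hpp : hperp ≤ hpar) {ν : ℝ} (hν : ν ≤ 1) :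
    0 < slabSemiAxis hpar hperp ν :=
  Real.sqrt_pos.2 (div_pos two_pos (slabWeight_pos hperp0 hpp hν))

theorem sum_div_slabSemiAxis_sq_le_one {ι : Type*} [Fintype ι] (hperp0 : 0 < hperp)
    (hpp : hperp ≤ hpar) {ν c : ι → ℝ} (hν : ∀ j, ν j ≤ 1)
    (hc_par : ∑ j, ν j * c j ^ 2 ≤ hpar ^ 2) (hc_perp : ∑ j, (1 - ν j) * c j ^ 2 ≤ hperp ^ 2) :
    ∑ j, (c j / slabSemiAxis hpar hperp (ν j)) ^ 2 ≤ 1 := by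
  have hpar0 : 0 < hpar := hperp0.trans_le hpp
  have hterm (j : ι) : (c j / slabSemiAxis hpar hperp (ν j)) ^ 2 =
      (ν j * c j ^ 2 / hpar ^ 2 + (1 - ν j) * c j ^ 2 / hperp ^ 2) / 2 := by
    rw [div_pow, slabSemiAxis,
      Real.sq_sqrt (div_pos two_pos (slabWeight_pos hperp0 hpp (hν j))).le, slabWeight]
    field_simp
  calc ∑ j, (c j / slabSemiAxis hpar hperp (ν j)) ^ 2
      = ((∑ j, ν j * c j ^ 2) / hpar ^ 2 + (∑ j, (1 - ν j) * c j ^ 2) / hperp ^ 2) / 2 := by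
        simp only [hterm, ← Finset.sum_div, Finset.sum_add_distrib]
    _ ≤ (hpar ^ 2 / hpar ^ 2 + hperp ^ 2 / hperp ^ 2) / 2 := by gcongr
    _ = 1 := by field_simp; norm_num

theorem ofReal_slabSemiAxis_le (hperp0 : 0 < hperp) (hpp : hperp ≤ hpar) {ν : ℝ}
    (hν : ν ∈ Icc 0 1) :
    ENNReal.ofReal (slabSemiAxis hpar hperp ν) ≤
      2 * min (ENNReal.ofReal hpar) (ENNReal.ofReal hperp / ENNReal.ofReal √(1 - ν)) := by
  have hpar0 : 0 < hpar := hperp0.trans_le hpp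
  have hw := slabWeight_pos hperp0 hpp hν.2
  have h_par : slabSemiAxis hpar hperp ν ≤ 2 * hpar := by
    rw [slabSemiAxis, Real.sqrt_le_left (by positivity), div_le_iff₀ hw]
    have := one_div_sq_le_slabWeight hperp0 hpp hν.2
    rw [div_le_iff₀ (by positivity)] at this
    nlinarith
  have h_perp : slabSemiAxis hpar hperp ν * √(1 - ν) ≤ 2 * hperp := by
    rw [slabSemiAxis, ← Real.sqrt_mul (by positivity), Real.sqrt_le_left (by positivity),
      div_mul_eq_mul_div, div_le_iff₀ hw, slabWeight]
    field_simp
    nlinarith [mul_nonneg hν.1 (sq_nonneg hperp), mul_nonneg (sub_nonneg.2 hν.2) (sq_nonneg hpar)]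
  have hr0 : 0 ≤ slabSemiAxis hpar hperp ν := Real.sqrt_nonneg _
  rw [mul_min, ← mul_div_assoc, ← ENNReal.ofReal_ofNat 2, ← ENNReal.ofReal_mul zero_le_two,
    ← ENNReal.ofReal_mul zero_le_two]
  refine le_min (ENNReal.ofReal_le_ofReal h_par) ?_
  rw [ENNReal.le_div_iff_mul_le (Or.inr (by simpa using hperp0)) (Or.inl ENNReal.ofReal_ne_top),
    ← ENNReal.ofReal_mul hr0]
  exact ENNReal.ofReal_le_ofReal h_perp

end SlabSemiAxis

theorem inter_slab_subset_ellipsoid {ι κ : Type*} [Fintype ι] [Fintype κ] [DecidableEq ι]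
    {D : ℕ} {T T' : Submodule ℝ (EuclideanSpace ℝ (Fin D))}
    {e : ι → EuclideanSpace ℝ (Fin D)} (he : Orthonormal ℝ e)
    (hse : Submodule.span ℝ (range e) = T)
    {u' : κ → EuclideanSpace ℝ (Fin D)} (hu' : Orthonormal ℝ u')
    (hsu' : Submodule.span ℝ (range u') = T') {ν : ι → ℝ}
    (hdiag : (crossGram u' e)ᵀ * crossGram u' e = Matrix.diagonal ν)
    {hpar hperp : ℝ} (hperp0 : 0 < hperp) (hpp : hperp ≤ hpar) :
    (T : Set (EuclideanSpace ℝ (Fin D))) ∩ slab T' 0 hpar hperp ⊆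
      ellipsoid e fun j => slabSemiAxis hpar hperp (ν j) := by
  rintro z ⟨hzT, hz⟩
  rw [← hse] at hzT
  obtain ⟨c, rfl⟩ := (Submodule.mem_span_range_iff_exists_fun ℝ).1 hzT
  rw [← hsu'] at hz
  obtain ⟨h_par, h_perp⟩ := sum_mul_sq_le_of_sum_smul_mem_slab he hu' hdiag hz
  exact ⟨c, sum_div_slabSemiAxis_sq_le_one hperp0 hpp
    (fun j => (mem_Icc_of_crossGram_eq_diagonal he hu' hdiag j).2) h_par h_perp, rfl⟩

/-- Here `θ k = arccos σ_k`, where `σ` lists the square roots of the eigenvalues of `A Aᵀ`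
(the singular values of `A = UᵀU'`, padded by zeros, i.e. `θ k = π/2` for `k > d'`). The
convention `h⊥ / sin 0 = ∞` is the `ℝ≥0∞`-valued division. -/
theorem stmt_1_general {D d d' : ℕ}
    (T T' : Submodule ℝ (EuclideanSpace ℝ (Fin D)))
    (hT : Module.finrank ℝ T = d)
    (u : Fin d → EuclideanSpace ℝ (Fin D)) (u' : Fin d' → EuclideanSpace ℝ (Fin D))
    (hu : Orthonormal ℝ u) (hu' : Orthonormal ℝ u')
    (hsu : Submodule.span ℝ (Set.range u) = T)
    (hsu' : Submodule.span ℝ (Set.range u') = T')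
    (A : Matrix (Fin d) (Fin d') ℝ) (hA : ∀ i j, A i j = ⟪u i, u' j⟫)
    (hH : (A * A.transpose).IsHermitian)
    (σ θ : Fin d → ℝ) (π : Equiv.Perm (Fin d))
    (hσ : ∀ k, σ k = Real.sqrt (hH.eigenvalues (π k)))
    (hθ : ∀ k, θ k = Real.arccos (σ k))
    (hpar hperp : ℝ) (hperp0 : 0 < hperp) (hpp : hperp ≤ hpar) :
    μH[(d : ℝ)] ((T : Set (EuclideanSpace ℝ (Fin D))) ∩ slab T' 0 hpar hperp)
      ≤ 4 ^ d * ∏ k : Fin d,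
          min (ENNReal.ofReal hpar)
            (ENNReal.ofReal hperp / ENNReal.ofReal (Real.sin (θ k))) := by
  set ν := hH.eigenvalues
  set W : Matrix (Fin d) (Fin d) ℝ := ↑hH.eigenvectorUnitary
  set e := fun j => ∑ i, W i j • u i
  have he : Orthonormal ℝ e := hu.sum_smul_of_mem_unitaryGroup hH.eigenvectorUnitary.2
  have hdiag : (crossGram u' e)ᵀ * crossGram u' e = Matrix.diagonal ν :=
    crossGram_sum_smul_eq_diagonal hA (by
      simpa [Matrix.star_eq_conjTranspose, W] using hH.conjStarAlgAut_star_eigenvectorUnitary)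
  have hν (j) := mem_Icc_of_crossGram_eq_diagonal he hu' hdiag j
  have hse : Submodule.span ℝ (range e) = T := by
    refine Submodule.eq_of_le_of_finrank_le ?_ ?_
    · rw [← hsu, Submodule.span_le, range_subset_iff]
      exact fun j => Submodule.sum_mem _ fun i _ =>
        Submodule.smul_mem _ _ (Submodule.subset_span (mem_range_self i))
    · rw [hT, finrank_span_eq_card he.linearIndependent, Fintype.card_fin]
  have hsin (k) : Real.sin (θ k) = √(1 - ν (π k)) := by
    rw [hθ, Real.sin_arccos, hσ, Real.sq_sqrt (hν _).1]
  calc μH[(d : ℝ)] ((T : Set (EuclideanSpace ℝ (Fin D))) ∩ slab T' 0 hpar hperp)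
      ≤ μH[(d : ℝ)] (ellipsoid e fun j => slabSemiAxis hpar hperp (ν j)) :=
        measure_mono (inter_slab_subset_ellipsoid he hse hu' hsu' hdiag hperp0 hpp)
    _ ≤ 2 ^ d * ∏ j, ENNReal.ofReal (slabSemiAxis hpar hperp (ν j)) := by
        simpa using hausdorffMeasure_ellipsoid_le he fun j => slabSemiAxis_pos hperp0 hpp (hν j).2
    _ ≤ 2 ^ d * ∏ j, 2 * min (ENNReal.ofReal hpar)
          (ENNReal.ofReal hperp / ENNReal.ofReal √(1 - ν j)) := by
        gcongr with j
        exact ofReal_slabSemiAxis_le hperp0 hpp (hν j)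
    _ = 4 ^ d * ∏ k : Fin d, min (ENNReal.ofReal hpar)
          (ENNReal.ofReal hperp / ENNReal.ofReal (Real.sin (θ k))) := by
        simp_rw [hsin, Finset.prod_mul_distrib, Finset.prod_const, Finset.card_univ,
          Fintype.card_fin, ← mul_assoc, ← mul_pow]
        rw [Equiv.prod_comp π (fun j => min (ENNReal.ofReal hpar)
          (ENNReal.ofReal hperp / ENNReal.ofReal √(1 - ν j)))]
        norm_num

/-- Volume bound for the intersection of a `d`-dimensional subspace with a slab around a
`d'`-dimensional subspace, in terms of the principal angles `θ k = arccos σ_k(UᵀU')`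
(extended by `π/2` for `k > d'`; here `σ` enumerates, in decreasing order, the square roots
of the eigenvalues of `(UᵀU')(UᵀU')ᵀ`).  The convention `h⊥ / sin 0 = ∞` is realized by
the `ℝ≥0∞`-valued division. -/
theorem stmt_1 {D d d' : ℕ} (hd' : d' ≤ d)
    (T T' : Submodule ℝ (EuclideanSpace ℝ (Fin D)))
    (hT : Module.finrank ℝ T = d) (hT' : Module.finrank ℝ T' = d')
    (u : Fin d → EuclideanSpace ℝ (Fin D)) (u' : Fin d' → EuclideanSpace ℝ (Fin D))
    (hu : Orthonormal ℝ u) (hu' : Orthonormal ℝ u')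
    (hsu : Submodule.span ℝ (Set.range u) = T)
    (hsu' : Submodule.span ℝ (Set.range u') = T')
    (A : Matrix (Fin d) (Fin d') ℝ) (hA : ∀ i j, A i j = ⟪u i, u' j⟫)
    (hH : (A * A.transpose).IsHermitian)
    (σ θ : Fin d → ℝ) (π : Equiv.Perm (Fin d))
    (hσ : ∀ k, σ k = Real.sqrt (hH.eigenvalues (π k)))
    (hσmono : Antitone σ)
    (hθ : ∀ k, θ k = Real.arccos (σ k))
    (hpar hperp : ℝ) (hperp0 : 0 < hperp) (hpp : hperp ≤ hpar) :
    μH[(d : ℝ)] ((T : Set (EuclideanSpace ℝ (Fin D))) ∩ slab T' 0 hpar hperp)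
      ≤ 4 ^ d * ∏ k : Fin d,
          min (ENNReal.ofReal hpar)
            (ENNReal.ofReal hperp / ENNReal.ofReal (Real.sin (θ k))) :=
  stmt_1_general T T' hT u u' hu hu' hsu hsu' A hA hH σ θ π hσ hθ hpar hperp hperp0 hpp
end
end

section
/- Let Ψ : 𝕄 → ℝ^D be an isometric C² immersion of a compact d-dimensional manifold with second fundamental form bounded by κ_max, fix x₀ ∈ 𝕄 and set x = Ψ(x₀). Then for every y₀ in the geodesic ball B_𝕄(x₀, 1/(4κ_max)) with y = Ψ(y₀), the Euclidean distance of y − x from the tangent space T := dΨ(x₀)[T_{x₀}𝕄] satisfies ‖(y − x) − π_T(y − x)‖ ≤ (κ_max/2)·‖y − x‖². -/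
/-!
Let `γ` be the unit-speed curve from `x₀` to `y₀` and `Γ = Ψ ∘ γ`. Reading `Γ` in a chart at `x₀`,
injectivity of `dΨ(x₀)` forces `Γ'(0) ∈ T`. For a unit vector `n ⊥ T` the function
`φ t = κ/2 ‖Γ t - Γ 0‖² - ⟪Γ t - Γ 0, n⟫` has `φ 0 = φ' 0 = 0` and, since `‖Γ'‖ = 1` and
`‖Γ''‖ ≤ κ`, satisfies `φ'' + κ² φ ≥ 0`. Sturm comparison with `cos (κ t)` gives `φ ≥ 0` while
`κ t < π / 2`: the curve stays outside the ball of radius `1/κ` tangent to `T` at `Ψ x₀` on the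
side of `n`. Choosing `n` along the normal component of `Ψ y₀ - Ψ x₀` gives the bound.
-/

open scoped Manifold RealInnerProductSpace
open Real Set Filter Topology Asymptotics

/-- Injectivity of `f'` gives `‖c t - c 0‖ = O(‖f (c t) - f (c 0)‖) = O(t)`, so the remainder of
the linearization of `f` along `c` is `o(t)` and `e` is a limit of vectors in the (closed) range
of `f'`. -/
theorem mem_range_of_hasDerivAt_comp {E F : Type*} [NormedAddCommGroup E] [NormedSpace ℝ E]
    [FiniteDimensional ℝ E] [NormedAddCommGroup F] [NormedSpace ℝ F]
    {f : E → F} {f' : E →L[ℝ] F} {c : ℝ → E} (hf : HasFDerivAt f f' (c 0))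
    (hf' : Function.Injective f') (hc : ContinuousAt c 0)
    {e : F} (he : HasDerivAt (f ∘ c) e 0) : e ∈ LinearMap.range (f' : E →ₗ[ℝ] F) := by
  set u : ℝ → E := fun t => c t - c 0
  set r : ℝ → F := fun t => f (c t) - f (c 0) - f' (u t)
  have hr : r =o[𝓝 0] u := hf.isLittleO.comp_tendsto hc.tendsto
  obtain ⟨K, -, hK⟩ := (f' : E →ₗ[ℝ] F).injective_iff_antilipschitz.mp hf'
  have hu : u =O[𝓝 0] fun t => f' (u t) :=
    .of_bound K (.of_forall fun t => f'.bound_of_antilipschitz hK (u t))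
  have hΔ : (fun t => f' (u t)) =O[𝓝 0] fun t => f (c t) - f (c 0) := by
    simpa [r] using (hr.trans_isBigO hu).right_isBigO_add
  have hΔt : (fun t => f (c t) - f (c 0)) =O[𝓝 0] fun t : ℝ => t := by
    simpa using he.isBigO_sub
  have hrt : r =o[𝓝 0] fun t : ℝ => t := hr.trans_isBigO (hu.trans (hΔ.trans hΔt))
  have hlim : Tendsto (fun t : ℝ => f' (t⁻¹ • u t)) (𝓝[≠] 0) (𝓝 e) := by
    have h1 := (hasDerivAt_iff_tendsto_slope.mp he).sub
      (hrt.tendsto_inv_smul_nhds_zero.mono_left nhdsWithin_le_nhds)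
    rw [sub_zero] at h1
    refine h1.congr fun t => ?_
    simp [slope_def_module, r, smul_sub]
  exact (Submodule.closed_of_finiteDimensional _).mem_of_tendsto hlim
    (.of_forall fun t => LinearMap.mem_range_self _ _)

theorem deriv_comp_mem_range_mfderiv {E H M E' : Type*} [NormedAddCommGroup E]
    [NormedSpace ℝ E] [FiniteDimensional ℝ E] [TopologicalSpace H]
    {I : ModelWithCorners ℝ E H} [I.Boundaryless] [TopologicalSpace M] [ChartedSpace H M]
    [NormedAddCommGroup E'] [NormedSpace ℝ E'] {Ψ : M → E'} {γ : ℝ → M}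
    (hΨ : MDifferentiableAt I 𝓘(ℝ, E') Ψ (γ 0))
    (hinj : Function.Injective (mfderiv I 𝓘(ℝ, E') Ψ (γ 0)))
    (hγ : ContinuousAt γ 0) (hΓ : DifferentiableAt ℝ (Ψ ∘ γ) 0) :
    deriv (Ψ ∘ γ) 0 ∈ LinearMap.range ((mfderiv I 𝓘(ℝ, E') Ψ (γ 0)).toLinearMap :
      TangentSpace I (γ 0) →ₗ[ℝ] E') := by
  have hF : HasFDerivAt (Ψ ∘ (extChartAt I (γ 0)).symm)
      (mfderiv I 𝓘(ℝ, E') Ψ (γ 0) : E →L[ℝ] E') (extChartAt I (γ 0) (γ 0)) :=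
    hasFDerivWithinAt_univ.mp <| by
      simpa [I.range_eq_univ, chartAt_self_eq] using hΨ.hasMFDerivAt.2
  have hsource : ∀ᶠ t in 𝓝 (0 : ℝ), γ t ∈ (extChartAt I (γ 0)).source :=
    hγ.preimage_mem_nhds (extChartAt_source_mem_nhds (γ 0))
  have hΓ' : HasDerivAt ((Ψ ∘ (extChartAt I (γ 0)).symm) ∘ (extChartAt I (γ 0) ∘ γ))
      (deriv (Ψ ∘ γ) 0) 0 := by
    refine hΓ.hasDerivAt.congr_of_eventuallyEq ?_
    filter_upwards [hsource] with t ht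
    simp only [Function.comp_apply, (extChartAt I (γ 0)).left_inv ht]
  exact mem_range_of_hasDerivAt_comp (E := E) (F := E') hF hinj ((continuousAt_extChartAt (γ 0)).comp hγ) hΓ'

theorem monotoneOn_Icc_of_hasDerivAt_nonneg {g g' : ℝ → ℝ} {a b : ℝ}
    (hg : ∀ t ∈ Icc a b, HasDerivAt g (g' t) t) (hg' : ∀ t ∈ Icc a b, 0 ≤ g' t) :
    MonotoneOn g (Icc a b) :=
  monotoneOn_of_hasDerivWithinAt_nonneg (convex_Icc a b)
    (fun t ht => (hg t ht).continuousAt.continuousWithinAt)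
    (fun t ht => (hg t (interior_subset ht)).hasDerivWithinAt)
    (fun t ht => hg' t (interior_subset ht))

theorem nonneg_of_sturm_comparison {φ φ' φ'' : ℝ → ℝ} {k L : ℝ} (hk : 0 ≤ k)
    (hkL : k * L < π / 2) (hφ : ∀ t, HasDerivAt φ (φ' t) t)
    (hφ' : ∀ t, HasDerivAt φ' (φ'' t) t) (h0 : φ 0 = 0) (h0' : φ' 0 = 0)
    (hineq : ∀ t ∈ Icc 0 L, 0 ≤ φ'' t + k ^ 2 * φ t) :
    ∀ t ∈ Icc 0 L, 0 ≤ φ t := by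
  have hcos : ∀ t ∈ Icc 0 L, 0 < cos (k * t) := fun t ht =>
    cos_pos_of_mem_Ioo ⟨by nlinarith [pi_pos, mul_nonneg hk ht.1],
      by nlinarith [mul_le_mul_of_nonneg_left ht.2 hk]⟩
  have hkt : ∀ t, HasDerivAt (fun s => k * s) k t := fun t => by
    simpa using (hasDerivAt_id t).const_mul k
  -- `u` is the Wronskian of `φ` and the comparison solution `cos (k t)`.
  set u : ℝ → ℝ := fun t => φ' t * cos (k * t) + k * φ t * sin (k * t)
  have hu : ∀ t, HasDerivAt u ((φ'' t + k ^ 2 * φ t) * cos (k * t)) t := fun t =>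
    (((hφ' t).mul (hkt t).cos).add (((hφ t).const_mul k).mul (hkt t).sin)).congr_deriv
      (by ring)
  have hu_nonneg : ∀ t ∈ Icc 0 L, 0 ≤ u t := fun t ht => by
    have := monotoneOn_Icc_of_hasDerivAt_nonneg (fun t _ => hu t)
      (fun t ht => mul_nonneg (hineq t ht) (hcos t ht).le) ⟨le_rfl, ht.1.trans ht.2⟩ ht ht.1
    simpa [u, h0, h0'] using this
  have hquot : ∀ t ∈ Icc 0 L,
      HasDerivAt (fun s => φ s / cos (k * s)) (u t / cos (k * t) ^ 2) t := fun t ht =>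
    ((hφ t).div (hkt t).cos (hcos t ht).ne').congr_deriv (by simp only [u]; ring)
  intro t ht
  have := monotoneOn_Icc_of_hasDerivAt_nonneg hquot
    (fun t ht => div_nonneg (hu_nonneg t ht) (sq_nonneg _)) ⟨le_rfl, ht.1.trans ht.2⟩ ht ht.1
  simp only [h0, mul_zero, cos_zero, div_one] at this
  simpa using (le_div_iff₀ (hcos t ht)).mp this

section InnerProductSpace

variable {E : Type*} [NormedAddCommGroup E] [InnerProductSpace ℝ E]

/-- The right side is `κ / 2 * (‖κ • Δ - n‖ - 1) ^ 2` plus `κ * ‖κ • Δ - n‖ + ⟪a, κ • Δ - n⟫ ≥ 0`. -/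
theorem add_inner_add_sq_mul_nonneg_of_norm_le {κ : ℝ} {a Δ n : E} (hn : ‖n‖ = 1) (ha : ‖a‖ ≤ κ) :
    0 ≤ κ + ⟪a, κ • Δ - n⟫ + κ ^ 2 * (κ / 2 * ‖Δ‖ ^ 2 - ⟪Δ, n⟫) := by
  have hw : ‖κ • Δ - n‖ ^ 2 = κ ^ 2 * ‖Δ‖ ^ 2 - 2 * κ * ⟪Δ, n⟫ + 1 := by
    rw [norm_sub_sq_real, norm_smul, real_inner_smul_left, hn, mul_pow, Real.norm_eq_abs,
      sq_abs]
    ring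
  have hinner : -(κ * ‖κ • Δ - n‖) ≤ ⟪a, κ • Δ - n⟫ := by
    have := neg_le_of_abs_le (abs_real_inner_le_norm a (κ • Δ - n))
    nlinarith [norm_nonneg (κ • Δ - n)]
  have hsq : κ ^ 2 * (κ / 2 * ‖Δ‖ ^ 2 - ⟪Δ, n⟫) = κ / 2 * (‖κ • Δ - n‖ ^ 2 - 1) := by
    rw [hw]; ring
  nlinarith [mul_nonneg ((norm_nonneg a).trans ha) (sq_nonneg (‖κ • Δ - n‖ - 1))]

theorem inner_sub_le_of_unit_speed_of_norm_accel_le {Γ : ℝ → E} {κ L : ℝ} (hκ : 0 ≤ κ)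
    (hκL : κ * L < π / 2) (hΓ : ContDiff ℝ 2 Γ) (hunit : ∀ t ∈ Icc 0 L, ‖deriv Γ t‖ = 1)
    (hacc : ∀ t ∈ Icc 0 L, ‖deriv (deriv Γ) t‖ ≤ κ) {n : E} (hn : ‖n‖ = 1)
    (hn0 : ⟪deriv Γ 0, n⟫ = 0) :
    ∀ t ∈ Icc 0 L, ⟪Γ t - Γ 0, n⟫ ≤ κ / 2 * ‖Γ t - Γ 0‖ ^ 2 := by
  have hΓ' : ∀ t, HasDerivAt Γ (deriv Γ t) t := fun t =>
    ((hΓ.differentiable (by norm_num)) t).hasDerivAt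
  have hΓ'' : ∀ t, HasDerivAt (deriv Γ) (deriv (deriv Γ) t) t := fun t =>
    (((contDiff_succ_iff_deriv (n := 1)).mp hΓ).2.2.differentiable (by norm_num) t).hasDerivAt
  have hΔ : ∀ t, HasDerivAt (fun s => Γ s - Γ 0) (deriv Γ t) t := fun t => (hΓ' t).sub_const _
  have hφ : ∀ t, HasDerivAt (fun s => κ / 2 * ‖Γ s - Γ 0‖ ^ 2 - ⟪Γ s - Γ 0, n⟫)
      (⟪deriv Γ t, κ • (Γ t - Γ 0) - n⟫) t := fun t => by
    refine (((hΔ t).norm_sq.const_mul (κ / 2)).sub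
      ((hΔ t).inner ℝ (hasDerivAt_const t n))).congr_deriv ?_
    simp only [inner_sub_right, real_inner_smul_right, inner_zero_right, real_inner_comm]
    ring
  have hφ' : ∀ t, HasDerivAt (fun s => ⟪deriv Γ s, κ • (Γ s - Γ 0) - n⟫)
      (κ * ‖deriv Γ t‖ ^ 2 + ⟪deriv (deriv Γ) t, κ • (Γ t - Γ 0) - n⟫) t := fun t => by
    refine ((hΓ'' t).inner ℝ (((hΔ t).const_smul κ).sub_const n)).congr_deriv ?_
    simp only [Pi.smul_apply, real_inner_smul_right, real_inner_self_eq_norm_sq]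
  intro t ht
  have := nonneg_of_sturm_comparison hκ hκL hφ hφ' (by simp) (by simp [hn0])
    (fun s hs => by simpa [hunit s hs] using add_inner_add_sq_mul_nonneg_of_norm_le hn (hacc s hs)) t ht
  linarith

theorem norm_sub_starProjection_le {K : Submodule ℝ E} [K.HasOrthogonalProjection] {v : E}
    {c : ℝ} (hc : 0 ≤ c) (h : ∀ n ∈ Kᗮ, ‖n‖ = 1 → ⟪v, n⟫ ≤ c) :
    ‖v - K.starProjection v‖ ≤ c := by
  set w := v - K.starProjection v
  rcases eq_or_ne w 0 with hw | hw
  · simpa [hw] using hc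
  have hvw : ⟪v, w⟫ = ‖w‖ ^ 2 := by
    rw [← real_inner_self_eq_norm_sq]
    nth_rw 1 [← sub_add_cancel v (K.starProjection v)]
    rw [inner_add_left, K.inner_right_of_mem_orthogonal (K.starProjection_apply_mem v)
      (K.sub_starProjection_mem_orthogonal v), add_zero]
  have hw' : 0 < ‖w‖ := norm_pos_iff.mpr hw
  have := h (‖w‖⁻¹ • w) (Kᗮ.smul_mem _ (K.sub_starProjection_mem_orthogonal v))
    (by rw [norm_smul, norm_inv, norm_norm, inv_mul_cancel₀ hw'.ne'])
  rw [real_inner_smul_right, hvw] at this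
  field_simp at this
  linarith

end InnerProductSpace

theorem stmt_7_general {d D : ℕ} {M : Type*} [MetricSpace M]
    [ChartedSpace (EuclideanSpace ℝ (Fin d)) M]
    (κ : ℝ) (hκ : 0 < κ)
    (Ψ : M → EuclideanSpace ℝ (Fin D))
    (hΨ : ContMDiff (𝓡 d) 𝓘(ℝ, EuclideanSpace ℝ (Fin D)) 2 Ψ)
    (himm : ∀ p : M,
      Function.Injective (mfderiv (𝓡 d) 𝓘(ℝ, EuclideanSpace ℝ (Fin D)) Ψ p))
    (hgeo : ∀ x y : M, ∃ γ : ℝ → M,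
      γ 0 = x ∧ γ (dist x y) = y ∧ LipschitzWith 1 γ ∧
      ContDiff ℝ 2 (Ψ ∘ γ) ∧
      (∀ t ∈ Set.Icc 0 (dist x y), ‖deriv (Ψ ∘ γ) t‖ = 1) ∧
      (∀ t ∈ Set.Icc 0 (dist x y), ‖deriv (deriv (Ψ ∘ γ)) t‖ ≤ κ))
    (x₀ : M)
    (T : Submodule ℝ (EuclideanSpace ℝ (Fin D)))
    (hT : T = LinearMap.range (ContinuousLinearMap.toLinearMap
      (mfderiv (𝓡 d) 𝓘(ℝ, EuclideanSpace ℝ (Fin D)) Ψ x₀) :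
      TangentSpace (𝓡 d) x₀ →ₗ[ℝ] EuclideanSpace ℝ (Fin D))) :
    ∀ y₀ ∈ Metric.closedBall x₀ (1 / (4 * κ)),
      ‖(Ψ y₀ - Ψ x₀) -
          (T.orthogonalProjectionOnto (Ψ y₀ - Ψ x₀) : EuclideanSpace ℝ (Fin D))‖
        ≤ κ / 2 * ‖Ψ y₀ - Ψ x₀‖ ^ 2 := by
  intro y₀ hy₀
  obtain ⟨γ, hγ0, hγL, hγ, hΓ, hunit, hacc⟩ := hgeo x₀ y₀
  have hκL : κ * dist x₀ y₀ < π / 2 := by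
    rw [Metric.mem_closedBall, dist_comm, le_div_iff₀ (by positivity)] at hy₀
    linarith [pi_gt_three]
  have hT0 : deriv (Ψ ∘ γ) 0 ∈ T := by
    subst hγ0 hT
    exact deriv_comp_mem_range_mfderiv (hΨ.mdifferentiableAt (by norm_num)) (himm _)
      hγ.continuous.continuousAt (hΓ.differentiable (by norm_num) 0)
  rw [T.coe_orthogonalProjectionOnto_apply]
  refine norm_sub_starProjection_le (by positivity) fun n hn hn1 => ?_
  simpa [hγ0, hγL] using inner_sub_le_of_unit_speed_of_norm_accel_le hκ.le hκL hΓ hunit hacc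
    hn1 (T.inner_right_of_mem_orthogonal hT0 hn) _ ⟨dist_nonneg, le_rfl⟩

/-- For an isometric `C²` immersion `Ψ` with second fundamental form bounded by `κ`
(encoded through unit-speed minimizing geodesics), every point `y₀` in the geodesic ball
of radius `1/(4κ)` around `x₀` satisfies
`‖(Ψ y₀ - Ψ x₀) - π_T(Ψ y₀ - Ψ x₀)‖ ≤ (κ/2)‖Ψ y₀ - Ψ x₀‖²`, where
`T = dΨ(x₀)[T_{x₀}𝕄]`. -/
theorem stmt_7 {d D : ℕ} {M : Type*} [MetricSpace M]
    [ChartedSpace (EuclideanSpace ℝ (Fin d)) M]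
    [IsManifold (𝓡 d) (⊤ : ℕ∞) M] [CompactSpace M]
    (κ : ℝ) (hκ : 0 < κ)
    (Ψ : M → EuclideanSpace ℝ (Fin D))
    (hΨ : ContMDiff (𝓡 d) 𝓘(ℝ, EuclideanSpace ℝ (Fin D)) 2 Ψ)
    (himm : ∀ p : M,
      Function.Injective (mfderiv (𝓡 d) 𝓘(ℝ, EuclideanSpace ℝ (Fin D)) Ψ p))
    (hgeo : ∀ x y : M, ∃ γ : ℝ → M,
      γ 0 = x ∧ γ (dist x y) = y ∧ LipschitzWith 1 γ ∧
      ContDiff ℝ 2 (Ψ ∘ γ) ∧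
      (∀ t ∈ Set.Icc 0 (dist x y), ‖deriv (Ψ ∘ γ) t‖ = 1) ∧
      (∀ t ∈ Set.Icc 0 (dist x y), ‖deriv (deriv (Ψ ∘ γ)) t‖ ≤ κ))
    (x₀ : M)
    (T : Submodule ℝ (EuclideanSpace ℝ (Fin D)))
    (hT : T = LinearMap.range (ContinuousLinearMap.toLinearMap
      (mfderiv (𝓡 d) 𝓘(ℝ, EuclideanSpace ℝ (Fin D)) Ψ x₀) :
      TangentSpace (𝓡 d) x₀ →ₗ[ℝ] EuclideanSpace ℝ (Fin D))) :
    ∀ y₀ ∈ Metric.closedBall x₀ (1 / (4 * κ)),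
      ‖(Ψ y₀ - Ψ x₀) -
          (T.orthogonalProjectionOnto (Ψ y₀ - Ψ x₀) : EuclideanSpace ℝ (Fin D))‖
        ≤ κ / 2 * ‖Ψ y₀ - Ψ x₀‖ ^ 2 :=
  stmt_7_general κ hκ Ψ hΨ himm hgeo x₀ T hT
end

section
/- In the setting of a local fiber decomposition: let Ψ : 𝕄 → ℝ^D be an isometric C² immersion of a compact manifold with curvature bound κ_max, let x ∈ ℝ^D, r ≤ 1/(4κ_max), and let U₁, U₂ be two distinct maximal path-connected components of Ψ^{-1}(Ψ(𝕄) ∩ B(x,r)). Then for any x₁ ∈ U₁ and x₂ ∈ U₂, the geodesic distance satisfies d_𝕄(x₁, x₂) ≥ 1/κ_max. -/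
/-!
If `x₁ ∈ U₁` and `x₂ ∈ U₂` were closer than `1/κ`, follow a minimizing unit-speed geodesic `γ`
from `x₁` to `x₂`. Its image `c = Ψ ∘ γ` in `ℝ^D` has length `L < 1/κ` and curvature at most `κ`,
so it stays within `r + L/2` of `x`, and then `‖c t - x‖²` has second derivative
`2 (‖c'‖² + ⟪c - x, c''⟫) ≥ 2 (1 - κ (r + L/2)) > 0`. Being convex, it is bounded by its values
at the endpoints, so the whole geodesic lies in the fiber; but then `U₁ ∪ γ ∪ U₂` is a larger
path-connected subset of the fiber, contradicting maximality.
-/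

open Set Metric

section Curves

variable {E : Type*}

theorem dist_le_add_half_of_lipschitzOnWith [PseudoMetricSpace E] {c : ℝ → E} {x : E}
    {r L t : ℝ} (hc : LipschitzOnWith 1 c (Icc 0 L)) (h₀ : dist (c 0) x ≤ r)
    (h_L : dist (c L) x ≤ r) (ht : t ∈ Icc 0 L) : dist (c t) x ≤ r + L / 2 := by
  have hL : 0 ≤ L := ht.1.trans ht.2
  have from_start : dist (c t) x ≤ t + r := calc
    dist (c t) x ≤ dist (c t) (c 0) + dist (c 0) x := dist_triangle _ _ _
    _ ≤ dist t 0 + r := by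
      gcongr
      simpa using hc.dist_le_mul t ht 0 (left_mem_Icc.mpr hL)
    _ = t + r := by rw [Real.dist_0_eq_abs, abs_of_nonneg ht.1]
  have from_end : dist (c t) x ≤ (L - t) + r := calc
    dist (c t) x ≤ dist (c t) (c L) + dist (c L) x := dist_triangle _ _ _
    _ ≤ dist t L + r := by
      gcongr
      simpa using hc.dist_le_mul t ht L (right_mem_Icc.mpr hL)
    _ = (L - t) + r := by rw [Real.dist_eq, abs_of_nonpos (by linarith [ht.2])]; ring
  rcases le_total t (L / 2) with h | h <;> linarith

variable [NormedAddCommGroup E] [InnerProductSpace ℝ E]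

open scoped RealInnerProductSpace in
theorem convexOn_norm_sub_sq_of_curvature_le {c : ℝ → E} {x : E} {κ R : ℝ} {s : Set ℝ}
    (hs : Convex ℝ s) (hc : ContDiff ℝ 2 c) (hspeed : ∀ t ∈ s, ‖deriv c t‖ = 1)
    (hacc : ∀ t ∈ s, ‖deriv (deriv c) t‖ ≤ κ) (hR : ∀ t ∈ s, ‖c t - x‖ ≤ R) (hκR : κ * R ≤ 1) :
    ConvexOn ℝ s (fun t => ‖c t - x‖ ^ 2) := by
  have hc₁ : Differentiable ℝ c := hc.differentiable two_ne_zero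
  have hc₂ : Differentiable ℝ (deriv c) := hc.differentiable_deriv_two
  have hsub : ∀ t, HasDerivAt (fun s => c s - x) (deriv c t) t :=
    fun t => (hc₁ t).hasDerivAt.sub_const x
  have hcont : Continuous fun t => ‖c t - x‖ ^ 2 := by fun_prop
  refine convexOn_of_hasDerivWithinAt2_nonneg hs hcont.continuousOn
    (f' := fun t => 2 * ⟪c t - x, deriv c t⟫)
    (f'' := fun t => 2 * (⟪c t - x, deriv (deriv c) t⟫ + ⟪deriv c t, deriv c t⟫))
    (fun t _ => (hsub t).norm_sq.hasDerivWithinAt)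
    (fun t _ => (((hsub t).inner ℝ (hc₂ t).hasDerivAt).const_mul 2).hasDerivWithinAt) ?_
  intro t ht
  have ht : t ∈ s := interior_subset ht
  have hcross : |⟪c t - x, deriv (deriv c) t⟫| ≤ κ * R := calc
    |⟪c t - x, deriv (deriv c) t⟫| ≤ ‖c t - x‖ * ‖deriv (deriv c) t‖ :=
      abs_real_inner_le_norm _ _
    _ = ‖deriv (deriv c) t‖ * ‖c t - x‖ := mul_comm _ _
    _ ≤ κ * R := mul_le_mul (hacc t ht) (hR t ht) (norm_nonneg _)
      ((norm_nonneg _).trans (hacc t ht))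
  have hunit : ⟪deriv c t, deriv c t⟫ = 1 := by
    rw [real_inner_self_eq_norm_sq, hspeed t ht, one_pow]
  have := (abs_le.mp hcross).1
  linarith

theorem dist_le_of_curvature_le {c : ℝ → E} {x : E} {κ r L : ℝ} (hc : ContDiff ℝ 2 c)
    (hspeed : ∀ t ∈ Icc 0 L, ‖deriv c t‖ = 1) (hacc : ∀ t ∈ Icc 0 L, ‖deriv (deriv c) t‖ ≤ κ)
    (hκ : κ * (r + L / 2) ≤ 1) (h₀ : dist (c 0) x ≤ r) (h_L : dist (c L) x ≤ r) :
    ∀ t ∈ Icc 0 L, dist (c t) x ≤ r := by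
  intro t ht
  have hL : 0 ≤ L := ht.1.trans ht.2
  have hr : 0 ≤ r := dist_nonneg.trans h₀
  have hlip : LipschitzOnWith 1 c (Icc 0 L) :=
    (convex_Icc 0 L).lipschitzOnWith_of_nnnorm_deriv_le
      (fun u _ => (hc.differentiable two_ne_zero u))
      (fun u hu => by rw [← NNReal.coe_le_coe, coe_nnnorm, hspeed u hu]; rfl)
  have hconv := convexOn_norm_sub_sq_of_curvature_le (convex_Icc 0 L) hc hspeed hacc
    (fun u hu => by
      simpa only [← dist_eq_norm] using dist_le_add_half_of_lipschitzOnWith hlip h₀ h_L hu) hκ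
  have hsq := hconv.le_on_segment (left_mem_Icc.mpr hL) (right_mem_Icc.mpr hL)
    (by rwa [segment_eq_Icc hL])
  simp only [← dist_eq_norm] at hsq
  rw [← sq_le_sq₀ dist_nonneg hr]
  refine hsq.trans (max_le ?_ ?_) <;> gcongr

end Curves

theorem eq_of_maximal_isPathConnected_of_joined {X : Type*} [TopologicalSpace X]
    {S U₁ U₂ A : Set X} (hpc₁ : IsPathConnected U₁) (hpc₂ : IsPathConnected U₂)
    (hU₁ : U₁ ⊆ S) (hU₂ : U₂ ⊆ S)
    (hmax₁ : ∀ V : Set X, IsPathConnected V → U₁ ⊆ V → V ⊆ S → V = U₁)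
    (hmax₂ : ∀ V : Set X, IsPathConnected V → U₂ ⊆ V → V ⊆ S → V = U₂)
    (hA : IsPathConnected A) (hAS : A ⊆ S) (h₁ : (U₁ ∩ A).Nonempty) (h₂ : (A ∩ U₂).Nonempty) :
    U₁ = U₂ := by
  have hV : IsPathConnected (U₁ ∪ (A ∪ U₂)) :=
    hpc₁.union (hA.union hpc₂ h₂) (h₁.mono (inter_subset_inter_right _ subset_union_left))
  have hVS : U₁ ∪ (A ∪ U₂) ⊆ S := union_subset hU₁ (union_subset hAS hU₂)
  exact (hmax₁ _ hV subset_union_left hVS).symm.trans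
    (hmax₂ _ hV (subset_union_right.trans subset_union_right) hVS)

open scoped Manifold

theorem stmt_10_general {D : ℕ} {M : Type*} [MetricSpace M]
    (κ : ℝ) (hκ : 0 < κ)
    (Ψ : M → EuclideanSpace ℝ (Fin D))
    (hgeo : ∀ x y : M, ∃ γ : ℝ → M,
      γ 0 = x ∧ γ (dist x y) = y ∧ LipschitzWith 1 γ ∧
      ContDiff ℝ 2 (Ψ ∘ γ) ∧
      (∀ t ∈ Set.Icc 0 (dist x y), ‖deriv (Ψ ∘ γ) t‖ = 1) ∧
      (∀ t ∈ Set.Icc 0 (dist x y), ‖deriv (deriv (Ψ ∘ γ)) t‖ ≤ κ))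
    (x : EuclideanSpace ℝ (Fin D)) (r : ℝ) (hr : r ≤ 1 / (4 * κ))
    (U₁ U₂ : Set M)
    (hU₁ : U₁ ⊆ Ψ ⁻¹' (Ψ '' Set.univ ∩ Metric.closedBall x r))
    (hU₂ : U₂ ⊆ Ψ ⁻¹' (Ψ '' Set.univ ∩ Metric.closedBall x r))
    (hpc₁ : IsPathConnected U₁) (hpc₂ : IsPathConnected U₂)
    (hmax₁ : ∀ V : Set M, IsPathConnected V → U₁ ⊆ V →
      V ⊆ Ψ ⁻¹' (Ψ '' Set.univ ∩ Metric.closedBall x r) → V = U₁)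
    (hmax₂ : ∀ V : Set M, IsPathConnected V → U₂ ⊆ V →
      V ⊆ Ψ ⁻¹' (Ψ '' Set.univ ∩ Metric.closedBall x r) → V = U₂)
    (hne : U₁ ≠ U₂) :
    ∀ x₁ ∈ U₁, ∀ x₂ ∈ U₂, 1 / κ ≤ dist x₁ x₂ := by
  intro x₁ hx₁ x₂ hx₂
  by_contra! hlt
  obtain ⟨γ, hγ₀, hγ_L, hγlip, hc, hspeed, hacc⟩ := hgeo x₁ x₂
  set L := dist x₁ x₂
  have hL : 0 ≤ L := dist_nonneg
  have hκ_short : κ * (r + L / 2) ≤ 1 := by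
    rw [le_div_iff₀ (by positivity)] at hr
    rw [lt_div_iff₀ hκ] at hlt
    nlinarith
  have hγ_fiber : γ '' Icc 0 L ⊆ Ψ ⁻¹' (Ψ '' univ ∩ closedBall x r) := by
    rintro _ ⟨t, ht, rfl⟩
    refine ⟨mem_image_of_mem Ψ (mem_univ _), ?_⟩
    refine dist_le_of_curvature_le hc hspeed hacc hκ_short ?_ ?_ t ht
    · simpa [hγ₀] using (hU₁ hx₁).2
    · simpa [hγ_L] using (hU₂ hx₂).2
  refine hne (eq_of_maximal_isPathConnected_of_joined hpc₁ hpc₂ hU₁ hU₂ hmax₁ hmax₂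
    (((convex_Icc 0 L).isPathConnected (nonempty_Icc.mpr hL)).image hγlip.continuous)
    hγ_fiber ⟨x₁, hx₁, 0, left_mem_Icc.mpr hL, hγ₀⟩ ⟨x₂, ⟨L, right_mem_Icc.mpr hL, hγ_L⟩, hx₂⟩)

/-- Distinct maximal path-connected components of a local fiber `Ψ⁻¹(Ψ(𝕄) ∩ B(x,r))`,
`r ≤ 1/(4κ)`, are at geodesic distance at least `1/κ` from one another, for an isometric
`C²` immersion `Ψ` of a compact manifold with second fundamental form bounded by `κ`
(encoded through unit-speed minimizing geodesics). -/
theorem stmt_10 {d D : ℕ} {M : Type*} [MetricSpace M]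
    [ChartedSpace (EuclideanSpace ℝ (Fin d)) M]
    [IsManifold (𝓡 d) (⊤ : ℕ∞) M] [CompactSpace M]
    (κ : ℝ) (hκ : 0 < κ)
    (Ψ : M → EuclideanSpace ℝ (Fin D))
    (hΨ : ContMDiff (𝓡 d) 𝓘(ℝ, EuclideanSpace ℝ (Fin D)) 2 Ψ)
    (himm : ∀ p : M,
      Function.Injective (mfderiv (𝓡 d) 𝓘(ℝ, EuclideanSpace ℝ (Fin D)) Ψ p))
    (hgeo : ∀ x y : M, ∃ γ : ℝ → M,
      γ 0 = x ∧ γ (dist x y) = y ∧ LipschitzWith 1 γ ∧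
      ContDiff ℝ 2 (Ψ ∘ γ) ∧
      (∀ t ∈ Set.Icc 0 (dist x y), ‖deriv (Ψ ∘ γ) t‖ = 1) ∧
      (∀ t ∈ Set.Icc 0 (dist x y), ‖deriv (deriv (Ψ ∘ γ)) t‖ ≤ κ))
    (x : EuclideanSpace ℝ (Fin D)) (r : ℝ) (hr0 : 0 < r) (hr : r ≤ 1 / (4 * κ))
    (U₁ U₂ : Set M)
    (hU₁ : U₁ ⊆ Ψ ⁻¹' (Ψ '' Set.univ ∩ Metric.closedBall x r))
    (hU₂ : U₂ ⊆ Ψ ⁻¹' (Ψ '' Set.univ ∩ Metric.closedBall x r))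
    (hpc₁ : IsPathConnected U₁) (hpc₂ : IsPathConnected U₂)
    (hmax₁ : ∀ V : Set M, IsPathConnected V → U₁ ⊆ V →
      V ⊆ Ψ ⁻¹' (Ψ '' Set.univ ∩ Metric.closedBall x r) → V = U₁)
    (hmax₂ : ∀ V : Set M, IsPathConnected V → U₂ ⊆ V →
      V ⊆ Ψ ⁻¹' (Ψ '' Set.univ ∩ Metric.closedBall x r) → V = U₂)
    (hne : U₁ ≠ U₂) :
    ∀ x₁ ∈ U₁, ∀ x₂ ∈ U₂, 1 / κ ≤ dist x₁ x₂ :=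
  stmt_10_general κ hκ Ψ hgeo x r hr U₁ U₂ hU₁ hU₂ hpc₁ hpc₂ hmax₁ hmax₂ hne
end

section
/- Let V, W ∈ ℝ^{D×d} be full-rank matrices with ‖W − V‖_op ≤ δ, ‖(VᵀV)^{-1}‖_op ≤ 2, and columns of norm at most 1 + 1/(4d) for V and W. Then there is a numerical constant C (independent of D, d, δ) such that the corresponding orthogonal projections onto the column spans satisfy ‖W(WᵀW)^{-1}Wᵀ − V(VᵀV)^{-1}Vᵀ‖_op ≤ C√d · δ, provided δ ≤ 1/(8√d). -/
/-!
Write `P_W - P_V = (1 - P_V) P_W - ((1 - P_W) P_V)ᵀ`. As `1 - P_V` kills `V`,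
`(1 - P_V) P_W = (1 - P_V) (W - V) (WᵀW)⁻¹ Wᵀ`, and `‖W (WᵀW)⁻¹‖² = ‖(WᵀW)⁻¹‖`, so this term has
norm at most `δ √‖(WᵀW)⁻¹‖`; symmetrically for the other one. The column bound gives
`‖V‖, ‖W‖ ≤ (5/4)√d`, hence `‖H - G‖ ≤ (5/2)√d δ ≤ 5/16` for `G = VᵀV`, `H = WᵀW`, and the
resolvent identity `H⁻¹ = G⁻¹ - H⁻¹ (H - G) G⁻¹` then gives `‖H⁻¹‖ ≤ 16/3`. Altogether
`‖P_W - P_V‖ ≤ (√(16/3) + √2) δ ≤ 4δ`.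
-/

open Matrix

noncomputable section

/-- The operator (spectral) norm of a rectangular real matrix, viewed as a linear map
between Euclidean spaces. -/
def opNorm {m n : ℕ} (A : Matrix (Fin m) (Fin n) ℝ) : ℝ :=
  ‖LinearMap.toContinuousLinearMap (Matrix.toEuclideanLin A)‖

open scoped Matrix.Norms.L2Operator

lemma opNorm_eq_l2_opNorm {m n : ℕ} (A : Matrix (Fin m) (Fin n) ℝ) : opNorm A = ‖A‖ := rfl

lemma norm_leftInv_mul_one_sub_le {R : Type*} [NormedRing R] {g gi h hi : R}
    (hh : hi * h = 1) (hg : g * gi = 1) : ‖hi‖ * (1 - ‖gi‖ * ‖h - g‖) ≤ ‖gi‖ := by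
  have hhi : hi = gi - hi * (h - g) * gi := by
    rw [mul_sub, sub_mul, hh, mul_assoc hi g, hg, one_mul, mul_one, sub_sub_cancel]
  have hle : ‖hi‖ ≤ ‖gi‖ + ‖hi‖ * ‖h - g‖ * ‖gi‖ :=
    calc ‖hi‖ = ‖gi - hi * (h - g) * gi‖ := congrArg _ hhi
      _ ≤ ‖gi‖ + ‖hi * (h - g) * gi‖ := norm_sub_le _ _
      _ ≤ ‖gi‖ + ‖hi‖ * ‖h - g‖ * ‖gi‖ := by gcongr; exact norm_mul₃_le
  linarith

namespace Matrix

variable {m n : Type*} [Fintype m] [Fintype n] [DecidableEq n]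

lemma l2_opNorm_transpose [DecidableEq m] (A : Matrix m n ℝ) : ‖Aᵀ‖ = ‖A‖ := by
  rw [← conjTranspose_eq_transpose_of_trivial, l2_opNorm_conjTranspose]

lemma l2_opNorm_transpose_mul_self (A : Matrix m n ℝ) : ‖Aᵀ * A‖ = ‖A‖ * ‖A‖ := by
  rw [← conjTranspose_eq_transpose_of_trivial, l2_opNorm_conjTranspose_mul_self]

lemma l2_opNorm_le_sqrt_sum_sq (A : Matrix m n ℝ) : ‖A‖ ≤ √(∑ i, ∑ j, A i j ^ 2) := by
  rw [l2_opNorm_def]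
  refine ContinuousLinearMap.opNorm_le_bound _ (Real.sqrt_nonneg _) fun x => ?_
  simp only [LinearEquiv.trans_apply, LinearMap.coe_toContinuousLinearMap',
    EuclideanSpace.norm_eq, toLpLin_apply, Real.norm_eq_abs, sq_abs]
  rw [← Real.sqrt_mul (by positivity)]
  refine Real.sqrt_le_sqrt ?_
  rw [Finset.sum_mul]
  refine Finset.sum_le_sum fun i _ => ?_
  simpa [mulVec, dotProduct] using Finset.sum_mul_sq_le_sq_mul_sq Finset.univ (A i) x

lemma l2_opNorm_le_sqrt_card_mul {A : Matrix m n ℝ} {c : ℝ} (hc : 0 ≤ c)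
    (hA : ∀ j, √(∑ i, A i j ^ 2) ≤ c) : ‖A‖ ≤ √(Fintype.card n) * c := by
  have hcol : ∀ j, ∑ i, A i j ^ 2 ≤ c ^ 2 := fun j => (Real.sqrt_le_left hc).mp (hA j)
  calc ‖A‖ ≤ √(∑ i, ∑ j, A i j ^ 2) := l2_opNorm_le_sqrt_sum_sq A
    _ = √(∑ j, ∑ i, A i j ^ 2) := by rw [Finset.sum_comm]
    _ ≤ √(Fintype.card n * c ^ 2) := by
        gcongr
        simpa using Finset.sum_le_sum fun j (_ : j ∈ Finset.univ) => hcol j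
    _ = √(Fintype.card n) * c := by rw [Real.sqrt_mul (by positivity), Real.sqrt_sq hc]

lemma l2_opNorm_transpose_mul_self_sub_le [DecidableEq m] (V W : Matrix m n ℝ) :
    ‖Wᵀ * W - Vᵀ * V‖ ≤ ‖W - V‖ * (‖W‖ + ‖V‖) := by
  have hsplit : Wᵀ * W - Vᵀ * V = Wᵀ * (W - V) + (W - V)ᵀ * V := by
    rw [transpose_sub, Matrix.mul_sub, Matrix.sub_mul]
    abel
  calc ‖Wᵀ * W - Vᵀ * V‖ ≤ ‖Wᵀ * (W - V)‖ + ‖(W - V)ᵀ * V‖ := hsplit ▸ norm_add_le _ _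
    _ ≤ ‖Wᵀ‖ * ‖W - V‖ + ‖(W - V)ᵀ‖ * ‖V‖ := add_le_add (l2_opNorm_mul _ _) (l2_opNorm_mul _ _)
    _ = ‖W - V‖ * (‖W‖ + ‖V‖) := by rw [l2_opNorm_transpose, l2_opNorm_transpose]; ring

lemma transpose_inv_transpose_mul_self (V : Matrix m n ℝ) : ((Vᵀ * V)⁻¹)ᵀ = (Vᵀ * V)⁻¹ := by
  rw [transpose_nonsing_inv, transpose_mul, transpose_transpose]

/-- `P_V` of the paper; a junk value unless `VᵀV` is invertible. -/
def colSpanProj (V : Matrix m n ℝ) : Matrix m m ℝ := V * (Vᵀ * V)⁻¹ * Vᵀ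

lemma colSpanProj_mul_self {V : Matrix m n ℝ} (hV : IsUnit (Vᵀ * V)) : colSpanProj V * V = V := by
  rw [colSpanProj, Matrix.mul_assoc, Matrix.mul_assoc,
    nonsing_inv_mul _ ((isUnit_iff_isUnit_det _).mp hV), Matrix.mul_one]

lemma transpose_colSpanProj (V : Matrix m n ℝ) : (colSpanProj V)ᵀ = colSpanProj V := by
  rw [colSpanProj, transpose_mul, transpose_mul, transpose_transpose,
    transpose_inv_transpose_mul_self, Matrix.mul_assoc]

lemma transpose_mul_colSpanProj {V : Matrix m n ℝ} (hV : IsUnit (Vᵀ * V)) :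
    Vᵀ * colSpanProj V = Vᵀ := by
  rw [← transpose_colSpanProj, ← transpose_mul, colSpanProj_mul_self hV]

lemma isStarProjection_colSpanProj [DecidableEq m] {V : Matrix m n ℝ} (hV : IsUnit (Vᵀ * V)) :
    IsStarProjection (colSpanProj V) where
  isIdempotentElem :=
    calc colSpanProj V * colSpanProj V = colSpanProj V * V * (Vᵀ * V)⁻¹ * Vᵀ := by
          simp only [colSpanProj, Matrix.mul_assoc]
      _ = colSpanProj V := by rw [colSpanProj_mul_self hV, colSpanProj]
  isSelfAdjoint := by
    rw [IsSelfAdjoint, star_eq_conjTranspose, conjTranspose_eq_transpose_of_trivial,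
      transpose_colSpanProj]

lemma l2_opNorm_mul_inv_transpose_mul_self {V : Matrix m n ℝ}
    (hV : IsUnit (Vᵀ * V)) : ‖V * (Vᵀ * V)⁻¹‖ = √‖(Vᵀ * V)⁻¹‖ := by
  have hgram : (V * (Vᵀ * V)⁻¹)ᵀ * (V * (Vᵀ * V)⁻¹) = (Vᵀ * V)⁻¹ := by
    rw [transpose_mul, transpose_inv_transpose_mul_self, Matrix.mul_assoc,
      ← Matrix.mul_assoc Vᵀ, mul_nonsing_inv _ ((isUnit_iff_isUnit_det _).mp hV), Matrix.mul_one]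
  rw [← Real.sqrt_mul_self (norm_nonneg (V * _)), ← l2_opNorm_transpose_mul_self, hgram]

lemma l2_opNorm_one_sub_colSpanProj_mul_colSpanProj_le [DecidableEq m] {V W : Matrix m n ℝ}
    (hV : IsUnit (Vᵀ * V)) (hW : IsUnit (Wᵀ * W)) :
    ‖(1 - colSpanProj V) * colSpanProj W‖ ≤ ‖W - V‖ * √‖(Wᵀ * W)⁻¹‖ := by
  have hV0 : (1 - colSpanProj V) * V = 0 := by
    rw [Matrix.sub_mul, Matrix.one_mul, colSpanProj_mul_self hV, sub_self]
  have hfactor : (1 - colSpanProj V) * colSpanProj W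
      = (1 - colSpanProj V) * (W - V) * (W * (Wᵀ * W)⁻¹)ᵀ := by
    rw [Matrix.mul_sub, hV0, sub_zero, transpose_mul, transpose_inv_transpose_mul_self]
    simp only [colSpanProj, Matrix.mul_assoc]
  calc ‖(1 - colSpanProj V) * colSpanProj W‖
      ≤ ‖1 - colSpanProj V‖ * ‖W - V‖ * ‖(W * (Wᵀ * W)⁻¹)ᵀ‖ := by
        rw [hfactor]
        exact (l2_opNorm_mul _ _).trans (mul_le_mul_of_nonneg_right (l2_opNorm_mul _ _)
          (norm_nonneg _))
    _ ≤ 1 * ‖W - V‖ * √‖(Wᵀ * W)⁻¹‖ := by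
        rw [l2_opNorm_transpose, l2_opNorm_mul_inv_transpose_mul_self hW]
        gcongr
        exact (isStarProjection_colSpanProj hV).one_sub.norm_le
    _ = ‖W - V‖ * √‖(Wᵀ * W)⁻¹‖ := by rw [one_mul]

lemma l2_opNorm_colSpanProj_sub_le [DecidableEq m] {V W : Matrix m n ℝ}
    (hV : IsUnit (Vᵀ * V)) (hW : IsUnit (Wᵀ * W)) :
    ‖colSpanProj W - colSpanProj V‖ ≤ ‖W - V‖ * (√‖(Wᵀ * W)⁻¹‖ + √‖(Vᵀ * V)⁻¹‖) := by
  have hPV := isStarProjection_colSpanProj hV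
  have hPW := isStarProjection_colSpanProj hW
  have hsplit : colSpanProj W - colSpanProj V
      = (1 - colSpanProj V) * colSpanProj W - star ((1 - colSpanProj W) * colSpanProj V) := by
    rw [star_mul, hPV.isSelfAdjoint.star_eq, hPW.one_sub.isSelfAdjoint.star_eq,
      Matrix.sub_mul, Matrix.mul_sub, Matrix.one_mul, Matrix.mul_one]
    abel
  calc ‖colSpanProj W - colSpanProj V‖
      ≤ ‖(1 - colSpanProj V) * colSpanProj W‖ + ‖(1 - colSpanProj W) * colSpanProj V‖ := by
        rw [hsplit, ← norm_star ((1 - colSpanProj W) * colSpanProj V)]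
        exact norm_sub_le _ _
    _ ≤ ‖W - V‖ * √‖(Wᵀ * W)⁻¹‖ + ‖V - W‖ * √‖(Vᵀ * V)⁻¹‖ :=
        add_le_add (l2_opNorm_one_sub_colSpanProj_mul_colSpanProj_le hV hW)
          (l2_opNorm_one_sub_colSpanProj_mul_colSpanProj_le hW hV)
    _ = ‖W - V‖ * (√‖(Wᵀ * W)⁻¹‖ + √‖(Vᵀ * V)⁻¹‖) := by rw [norm_sub_rev V W]; ring

end Matrix

/-- Stability of the orthogonal projection `V ↦ V(VᵀV)⁻¹Vᵀ` onto the column span: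
there is a numerical constant `C` such that for full-rank `V, W` with
`‖W - V‖_op ≤ δ ≤ 1/(8√d)`, `‖(VᵀV)⁻¹‖_op ≤ 2` and columns of norm at most `1 + 1/(4d)`,
one has `‖P_W - P_V‖_op ≤ C √d δ`. -/
theorem stmt_17 :
    ∃ C : ℝ, 0 < C ∧
      ∀ (D d : ℕ), 0 < d →
        ∀ (V W : Matrix (Fin D) (Fin d) ℝ) (δ : ℝ), 0 ≤ δ →
          δ ≤ 1 / (8 * Real.sqrt d) →
          IsUnit (Vᵀ * V) → IsUnit (Wᵀ * W) →
          opNorm (W - V) ≤ δ →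
          opNorm ((Vᵀ * V)⁻¹) ≤ 2 →
          (∀ j, Real.sqrt (∑ i, V i j ^ 2) ≤ 1 + 1 / (4 * d)) →
          (∀ j, Real.sqrt (∑ i, W i j ^ 2) ≤ 1 + 1 / (4 * d)) →
          opNorm (W * (Wᵀ * W)⁻¹ * Wᵀ - V * (Vᵀ * V)⁻¹ * Vᵀ) ≤ C * Real.sqrt d * δ := by
  refine ⟨4, by norm_num, fun D d hd V W δ hδ0 hδ hV hW hWV hVinv hVcol hWcol => ?_⟩
  simp only [opNorm_eq_l2_opNorm] at hWV hVinv ⊢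
  have hsd : 1 ≤ √(d : ℝ) := Real.one_le_sqrt.mpr (by exact_mod_cast hd)
  have hδd : √d * δ ≤ 1 / 8 := by rw [le_div_iff₀ (by positivity)] at hδ; linarith
  have hcol : 1 + 1 / (4 * (d : ℝ)) ≤ 5 / 4 := by
    have : 1 / (4 * (d : ℝ)) ≤ 1 / 4 := by
      rw [div_le_div_iff₀ (by positivity) (by norm_num)]
      linarith [(Real.one_le_sqrt.mp hsd)]
    linarith
  have hVnorm : ‖V‖ ≤ √d * (5 / 4) := by
    simpa using (l2_opNorm_le_sqrt_card_mul (by positivity) hVcol).trans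
      (mul_le_mul_of_nonneg_left hcol (Real.sqrt_nonneg _))
  have hWnorm : ‖W‖ ≤ √d * (5 / 4) := by
    simpa using (l2_opNorm_le_sqrt_card_mul (by positivity) hWcol).trans
      (mul_le_mul_of_nonneg_left hcol (Real.sqrt_nonneg _))
  have hgram : ‖Wᵀ * W - Vᵀ * V‖ ≤ 5 / 16 :=
    (l2_opNorm_transpose_mul_self_sub_le V W).trans (by nlinarith [norm_nonneg (W - V)])
  have hWinv : ‖(Wᵀ * W)⁻¹‖ ≤ 16 / 3 := by
    have := norm_leftInv_mul_one_sub_le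
      (nonsing_inv_mul _ ((isUnit_iff_isUnit_det _).mp hW))
      (mul_nonsing_inv _ ((isUnit_iff_isUnit_det _).mp hV))
    have hsmall : ‖(Vᵀ * V)⁻¹‖ * ‖Wᵀ * W - Vᵀ * V‖ ≤ 2 * (5 / 16) :=
      mul_le_mul hVinv hgram (norm_nonneg _) (by norm_num)
    nlinarith [mul_le_mul_of_nonneg_left hsmall (norm_nonneg (Wᵀ * W)⁻¹)]
  calc ‖colSpanProj W - colSpanProj V‖
      ≤ δ * (√(16 / 3) + √2) := (l2_opNorm_colSpanProj_sub_le hV hW).trans (by gcongr)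
    _ ≤ δ * 4 := by
        have h1 : √(16 / 3 : ℝ) ≤ 7 / 3 := (Real.sqrt_le_left (by norm_num)).mpr (by norm_num)
        have h2 : √(2 : ℝ) ≤ 3 / 2 := (Real.sqrt_le_left (by norm_num)).mpr (by norm_num)
        gcongr
        linarith
    _ ≤ 4 * √d * δ := by nlinarith
end
end

section
/- Let M ⊆ ℝ^D admit a C² immersion parametrization, let x ∈ M, and let (𝕄, Ψ), (𝕄', Ψ') be two compact C² manifolds with C² immersions onto M (Ψ(𝕄) = Ψ'(𝕄') = M). Then the pushed-forward tangent cones agree: ⋃_{x₀ ∈ Ψ^{-1}(x)} dΨ(x₀)[T_{x₀}𝕄] = ⋃_{x₀' ∈ Ψ'^{-1}(x)} dΨ'(x₀')[T_{x₀'}𝕄']. Moreover this common set equals { v ∈ ℝ^D : for all ε > 0 there exists y ∈ (M ∩ B(x,ε)) \ {x} with ‖ (y−x)/‖y−x‖ − v/‖v‖ ‖ < ε } together with 0. -/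
/-!
A nonzero vector satisfies the secant condition exactly when it lies in the positive tangent cone
`posTangentConeAt M x`, so it suffices to show that for every compact immersion `Ψ` onto `M` the
union of the images `dΨ(p)[T_p𝕄]` over `p ∈ Ψ⁻¹(x)` is that cone. Each image lies in the cone
because differentials map tangent cones into tangent cones. Conversely, a cone direction `v` is a
limit of rescaled secants `c n • d n` with `x + d n = Ψ (p n)`; by compactness the `p n` cluster at
some `p₀`, necessarily in `Ψ⁻¹(x)`. In a chart at `p₀`, injectivity of `dΨ(p₀)` makes the chart
increments comparable to `d n`, so `v` is a limit of vectors in the closed subspace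
`dΨ(p₀)[T_{p₀}𝕄]`.
-/

open scoped Manifold Topology NNReal
open Filter Set Metric Asymptotics Function

section Secant

variable {E : Type*} [NormedAddCommGroup E] [NormedSpace ℝ E]

theorem mem_posTangentConeAt_iff_secant {s : Set E} {x v : E} (hv : v ≠ 0) :
    v ∈ posTangentConeAt s x ↔ ∀ ε > 0, ∃ y ∈ s ∩ ball x ε, y ≠ x ∧
      ‖‖y - x‖⁻¹ • (y - x) - ‖v‖⁻¹ • v‖ < ε := by
  have hunit : ContinuousAt (fun w : E => ‖w‖⁻¹ • w) v :=
    (continuous_norm.continuousAt.inv₀ (norm_ne_zero_iff.2 hv)).smul continuousAt_id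
  constructor
  · intro h ε hε
    obtain ⟨α, l, hl, c, d, hd₀, hds, hcd⟩ := exists_fun_of_mem_tangentConeAt h
    have hc : ∀ᶠ n in l, c n ≠ 0 := (hcd.eventually_ne hv).mono fun n => left_ne_zero_of_smul
    have hdir : Tendsto (fun n => ‖d n‖⁻¹ • d n) l (𝓝 (‖v‖⁻¹ • v)) := by
      refine (hunit.tendsto.comp hcd).congr' ?_
      filter_upwards [hc] with n hn
      simp only [comp_apply, NNReal.smul_def, norm_smul, smul_smul, Real.norm_eq_abs,
        NNReal.abs_eq, mul_inv]
      rw [mul_right_comm, inv_mul_cancel₀ (NNReal.coe_ne_zero.2 hn), one_mul]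
    obtain ⟨n, hns, hnd, hn0, hndir⟩ := (hds.and ((hd₀.eventually (ball_mem_nhds 0 hε)).and
      ((hcd.eventually_ne hv).and (hdir.eventually (ball_mem_nhds _ hε))))).exists
    refine ⟨x + d n, ⟨hns, by simpa using hnd⟩, ?_, by simpa [dist_eq_norm] using hndir⟩
    simpa using right_ne_zero_of_smul hn0
  · intro h
    choose y hy _ hyv using fun n : ℕ => h (1 / (n + 1)) Nat.one_div_pos_of_nat
    have hε : Tendsto (fun n : ℕ => 1 / ((n : ℝ) + 1)) atTop (𝓝 0) :=
      tendsto_one_div_add_atTop_nhds_zero_nat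
    refine mem_tangentConeAt_of_seq atTop (fun n => ‖v‖₊ / ‖y n - x‖₊) (fun n => y n - x)
      ?_ (.of_forall fun n => by simpa using (hy n).1) ?_
    · have hyx : Tendsto y atTop (𝓝 x) := tendsto_iff_dist_tendsto_zero.2 <|
        squeeze_zero (fun n => dist_nonneg) (fun n => (hy n).2.le) hε
      simpa using hyx.sub_const x
    · have hdir : Tendsto (fun n => ‖y n - x‖⁻¹ • (y n - x)) atTop (𝓝 (‖v‖⁻¹ • v)) :=
        tendsto_iff_norm_sub_tendsto_zero.2 <|
          squeeze_zero (fun n => norm_nonneg _) (fun n => (hyv n).le) hε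
      convert hdir.const_smul ‖v‖ using 1
      · ext n
        simp [NNReal.smul_def, div_eq_mul_inv, mul_smul]
      · rw [smul_inv_smul₀ (norm_ne_zero_iff.2 hv)]

theorem posTangentConeAt_eq_zero_union_secant {s : Set E} {x : E} (hx : x ∈ s) :
    posTangentConeAt s x = {0} ∪ {v | ∀ ε > 0, ∃ y ∈ s ∩ ball x ε, y ≠ x ∧
      ‖‖y - x‖⁻¹ • (y - x) - ‖v‖⁻¹ • v‖ < ε} := by
  ext v
  rcases eq_or_ne v 0 with rfl | hv
  · simpa using zero_mem_tangentConeAt (𝕜 := ℝ≥0) (subset_closure hx)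
  · simp [hv, mem_posTangentConeAt_iff_secant hv]

end Secant

section Derivative

variable {E F : Type*} [NormedAddCommGroup E] [NormedSpace ℝ E]
  [NormedAddCommGroup F] [NormedSpace ℝ F] {f : E → F} {f' : E →L[ℝ] F}

theorem HasFDerivWithinAt.mapsTo_posTangentConeAt {s : Set E} {x : E}
    (h : HasFDerivWithinAt f f' s x) :
    MapsTo f' (posTangentConeAt s x) (posTangentConeAt (f '' s) (f x)) := by
  intro y hy
  obtain ⟨α, l, hl, c, d, hd₀, hds, hcd⟩ := exists_fun_of_mem_tangentConeAt hy
  refine mem_tangentConeAt_of_seq l c (fun n => f (x + d n) - f x) ?_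
    (hds.mono fun n hn => ⟨x + d n, hn, by simp⟩) ?_
  · rw [tendsto_sub_nhds_zero_iff]
    refine h.continuousWithinAt.tendsto.comp <| tendsto_nhdsWithin_iff.mpr ⟨?_, hds⟩
    simpa using tendsto_const_nhds.add hd₀
  · simpa only [NNReal.smul_def] using h.lim (c := fun n => (c n : ℝ)) hd₀ hds hcd

theorem HasFDerivAt.mem_range_of_tendsto_smul_sub [FiniteDimensional ℝ E] {z₀ : E}
    (hf : HasFDerivAt f f' z₀) (hinj : Injective f') {α : Type*} {l : Filter α} [l.NeBot]
    {z : α → E} {c : α → ℝ} {v : F} (hz : Tendsto z l (𝓝 z₀))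
    (hv : Tendsto (fun n => c n • (f (z n) - f z₀)) l (𝓝 v)) :
    v ∈ range f' := by
  obtain ⟨K, -, hK⟩ := (f' : E →ₗ[ℝ] F).injective_iff_antilipschitz.1 hinj
  -- injectivity makes `z n - z₀ = O(f' (z n - z₀))`, so the increments of `f` are asymptotic to it
  have hequiv : (fun n => f (z n) - f z₀) ~[l] fun n => f' (z n - z₀) := by
    refine (hf.isLittleO.comp_tendsto hz).trans_isBigO (isBigO_iff.2 ⟨K, .of_forall fun n => ?_⟩)
    simpa using hK.le_mul_dist (z n - z₀) 0
  have hrem : Tendsto (fun n => c n • (f (z n) - f z₀) - c n • f' (z n - z₀)) l (𝓝 0) := by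
    have h := ((isBigO_refl c l).smul_isLittleO (hequiv.isLittleO.trans_isBigO
      hequiv.isBigO_symm)).trans_isBigO (hv.isBigO_one ℝ)
    rw [isLittleO_one_iff] at h
    simpa only [Pi.smul_apply', Pi.sub_apply, smul_sub] using h
  have hlim : Tendsto (fun n => f' (c n • (z n - z₀))) l (𝓝 v) := by
    simpa using hv.sub hrem
  exact (LinearMap.range f'.toLinearMap).closed_of_finiteDimensional.mem_of_tendsto hlim
    (.of_forall fun n => mem_range_self _)

end Derivative

section Immersion

variable {E H F : Type*} [NormedAddCommGroup E] [NormedSpace ℝ E] [TopologicalSpace H]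
  {I : ModelWithCorners ℝ E H} {M : Type*} [TopologicalSpace M] [ChartedSpace H M]
  [NormedAddCommGroup F] [NormedSpace ℝ F] {Ψ : M → F}

theorem MDifferentiableAt.hasFDerivAt_comp_extChartAt_symm [I.Boundaryless] {p : M}
    (h : MDifferentiableAt I 𝓘(ℝ, F) Ψ p) :
    HasFDerivAt (Ψ ∘ (extChartAt I p).symm) (mfderiv I 𝓘(ℝ, F) Ψ p) (extChartAt I p p) := by
  have h' := h.hasMFDerivAt.2
  rw [I.range_eq_univ] at h'
  simpa [writtenInExtChartAt, extChartAt_model_space_eq_id, chartAt_self_eq] using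
    hasFDerivWithinAt_univ.mp h'

theorem MDifferentiableAt.range_mfderiv_subset_posTangentConeAt [I.Boundaryless] {p : M}
    (h : MDifferentiableAt I 𝓘(ℝ, F) Ψ p) :
    range (mfderiv I 𝓘(ℝ, F) Ψ p) ⊆ posTangentConeAt (range Ψ) (Ψ p) := by
  rintro _ ⟨w, rfl⟩
  have hw := h.hasFDerivAt_comp_extChartAt_symm.hasFDerivWithinAt.mapsTo_posTangentConeAt
    (by rw [posTangentConeAt_univ]; trivial : (w : E) ∈ posTangentConeAt univ (extChartAt I p p))
  rw [comp_apply, extChartAt_to_inv] at hw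
  exact posTangentConeAt_mono (E := F)
    ((image_subset_range _ _).trans (range_comp_subset_range _ _)) hw

theorem MDifferentiableAt.mem_range_mfderiv_of_tendsto_smul_sub [I.Boundaryless]
    [FiniteDimensional ℝ E] {p₀ : M}
    (h : MDifferentiableAt I 𝓘(ℝ, F) Ψ p₀) (hinj : Injective (mfderiv I 𝓘(ℝ, F) Ψ p₀))
    {α : Type*} {l : Filter α} [l.NeBot] {p : α → M} {c : α → ℝ} {v : F}
    (hp : Tendsto p l (𝓝 p₀)) (hv : Tendsto (fun n => c n • (Ψ (p n) - Ψ p₀)) l (𝓝 v)) :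
    v ∈ range (mfderiv I 𝓘(ℝ, F) Ψ p₀) := by
  refine h.hasFDerivAt_comp_extChartAt_symm.mem_range_of_tendsto_smul_sub hinj (c := c)
    ((continuousAt_extChartAt (I := I) p₀).tendsto.comp hp) (hv.congr' ?_)
  filter_upwards [hp (extChartAt_source_mem_nhds (I := I) p₀)]
    with n (hn : p n ∈ (extChartAt I p₀).source)
  simp only [comp_apply, extChartAt_to_inv, (extChartAt I p₀).left_inv hn]

theorem exists_mem_range_mfderiv_of_mem_posTangentConeAt [I.Boundaryless] [FiniteDimensional ℝ E]
    [CompactSpace M] (hΨ : MDifferentiable I 𝓘(ℝ, F) Ψ)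
    (himm : ∀ p, Injective (mfderiv I 𝓘(ℝ, F) Ψ p)) {x v : F}
    (hv : v ∈ posTangentConeAt (range Ψ) x) :
    ∃ p, Ψ p = x ∧ v ∈ range (mfderiv I 𝓘(ℝ, F) Ψ p) := by
  obtain ⟨α, l, hl, c, d, hd₀, hds, hcd⟩ := exists_fun_of_mem_tangentConeAt hv
  obtain ⟨-, q, -⟩ := hds.exists
  have : Nonempty M := ⟨q⟩
  set p : α → M := fun n => invFun Ψ (x + d n)
  have hΨp : ∀ᶠ n in l, Ψ (p n) = x + d n := hds.mono fun n hn => invFun_eq hn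
  obtain ⟨p₀, hp₀⟩ := exists_clusterPt_of_compactSpace (map p l)
  set ℱ := comap p (𝓝 p₀) ⊓ l
  have : ℱ.NeBot := neBot_inf_comap_iff_map'.2 hp₀
  have hp : Tendsto p ℱ (𝓝 p₀) := tendsto_comap.mono_left inf_le_left
  have hΨp' : ∀ᶠ n in ℱ, Ψ (p n) = x + d n := hΨp.filter_mono inf_le_right
  have hx : Ψ p₀ = x := by
    refine tendsto_nhds_unique ((hΨ.continuous.tendsto p₀).comp hp) ?_
    refine Tendsto.congr' (hΨp'.mono fun n hn => hn.symm) ?_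
    simpa using (tendsto_const_nhds.add hd₀).mono_left (inf_le_right : ℱ ≤ l)
  refine ⟨p₀, hx, (hΨ p₀).mem_range_mfderiv_of_tendsto_smul_sub (himm p₀) hp
    (c := fun n => (c n : ℝ)) ?_⟩
  refine (hcd.mono_left inf_le_right).congr' ?_
  filter_upwards [hΨp'] with n hn
  simp [hn, hx, NNReal.smul_def]

theorem biUnion_range_mfderiv_eq_posTangentConeAt [I.Boundaryless] [FiniteDimensional ℝ E]
    [CompactSpace M] (hΨ : MDifferentiable I 𝓘(ℝ, F) Ψ)
    (himm : ∀ p, Injective (mfderiv I 𝓘(ℝ, F) Ψ p)) (x : F) :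
    ⋃ p ∈ Ψ ⁻¹' {x}, range (mfderiv I 𝓘(ℝ, F) Ψ p) = posTangentConeAt (range Ψ) x := by
  refine subset_antisymm (iUnion₂_subset fun p hp => ?_) fun v hv => ?_
  · rw [← mem_singleton_iff.1 hp]
    exact (hΨ p).range_mfderiv_subset_posTangentConeAt
  · obtain ⟨p, hp, hvp⟩ := exists_mem_range_mfderiv_of_mem_posTangentConeAt hΨ himm hv
    exact mem_biUnion hp hvp

end Immersion

theorem stmt_19_general {d₁ d₂ D : ℕ}
    {M₁ : Type*} [TopologicalSpace M₁] [ChartedSpace (EuclideanSpace ℝ (Fin d₁)) M₁]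
    [CompactSpace M₁]
    {M₂ : Type*} [TopologicalSpace M₂] [ChartedSpace (EuclideanSpace ℝ (Fin d₂)) M₂]
    [CompactSpace M₂]
    (Ψ₁ : M₁ → EuclideanSpace ℝ (Fin D)) (Ψ₂ : M₂ → EuclideanSpace ℝ (Fin D))
    (hΨ₁ : ContMDiff (𝓡 d₁) 𝓘(ℝ, EuclideanSpace ℝ (Fin D)) 2 Ψ₁)
    (hΨ₂ : ContMDiff (𝓡 d₂) 𝓘(ℝ, EuclideanSpace ℝ (Fin D)) 2 Ψ₂)
    (himm₁ : ∀ p : M₁,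
      Function.Injective (mfderiv (𝓡 d₁) 𝓘(ℝ, EuclideanSpace ℝ (Fin D)) Ψ₁ p))
    (himm₂ : ∀ p : M₂,
      Function.Injective (mfderiv (𝓡 d₂) 𝓘(ℝ, EuclideanSpace ℝ (Fin D)) Ψ₂ p))
    (Mset : Set (EuclideanSpace ℝ (Fin D)))
    (hM₁ : Ψ₁ '' Set.univ = Mset) (hM₂ : Ψ₂ '' Set.univ = Mset)
    (x : EuclideanSpace ℝ (Fin D)) (hx : x ∈ Mset) :
    (⋃ x₀ ∈ Ψ₁ ⁻¹' {x},
        ((LinearMap.range (mfderiv (𝓡 d₁) 𝓘(ℝ, EuclideanSpace ℝ (Fin D)) Ψ₁ x₀).toLinearMap :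
          Submodule ℝ (EuclideanSpace ℝ (Fin D))) : Set (EuclideanSpace ℝ (Fin D))))
      = (⋃ x₀ ∈ Ψ₂ ⁻¹' {x},
        ((LinearMap.range (mfderiv (𝓡 d₂) 𝓘(ℝ, EuclideanSpace ℝ (Fin D)) Ψ₂ x₀).toLinearMap :
          Submodule ℝ (EuclideanSpace ℝ (Fin D))) : Set (EuclideanSpace ℝ (Fin D)))) ∧
    (⋃ x₀ ∈ Ψ₁ ⁻¹' {x},
        ((LinearMap.range (mfderiv (𝓡 d₁) 𝓘(ℝ, EuclideanSpace ℝ (Fin D)) Ψ₁ x₀).toLinearMap :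
          Submodule ℝ (EuclideanSpace ℝ (Fin D))) : Set (EuclideanSpace ℝ (Fin D))))
      = {0} ∪ {v : EuclideanSpace ℝ (Fin D) | ∀ ε > 0,
          ∃ y ∈ Mset ∩ Metric.ball x ε, y ≠ x ∧
            ‖‖y - x‖⁻¹ • (y - x) - ‖v‖⁻¹ • v‖ < ε} := by
  have hcone₁ := biUnion_range_mfderiv_eq_posTangentConeAt (hΨ₁.mdifferentiable two_ne_zero)
    himm₁ x
  have hcone₂ := biUnion_range_mfderiv_eq_posTangentConeAt (hΨ₂.mdifferentiable two_ne_zero)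
    himm₂ x
  rw [← image_univ, hM₁] at hcone₁
  rw [← image_univ, hM₂] at hcone₂
  exact ⟨hcone₁.trans hcone₂.symm, hcone₁.trans (posTangentConeAt_eq_zero_union_secant hx)⟩

/-- The pushed-forward tangent cone of a set `Mset ⊆ ℝ^D` does not depend on the chosen
compact `C²` immersion parametrizing it, and admits an intrinsic characterization via
normalized secant directions (together with `0`). -/
theorem stmt_19 {d₁ d₂ D : ℕ}
    {M₁ : Type*} [TopologicalSpace M₁] [ChartedSpace (EuclideanSpace ℝ (Fin d₁)) M₁]
    [IsManifold (𝓡 d₁) (⊤ : ℕ∞) M₁] [CompactSpace M₁]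
    {M₂ : Type*} [TopologicalSpace M₂] [ChartedSpace (EuclideanSpace ℝ (Fin d₂)) M₂]
    [IsManifold (𝓡 d₂) (⊤ : ℕ∞) M₂] [CompactSpace M₂]
    (Ψ₁ : M₁ → EuclideanSpace ℝ (Fin D)) (Ψ₂ : M₂ → EuclideanSpace ℝ (Fin D))
    (hΨ₁ : ContMDiff (𝓡 d₁) 𝓘(ℝ, EuclideanSpace ℝ (Fin D)) 2 Ψ₁)
    (hΨ₂ : ContMDiff (𝓡 d₂) 𝓘(ℝ, EuclideanSpace ℝ (Fin D)) 2 Ψ₂)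
    (himm₁ : ∀ p : M₁,
      Function.Injective (mfderiv (𝓡 d₁) 𝓘(ℝ, EuclideanSpace ℝ (Fin D)) Ψ₁ p))
    (himm₂ : ∀ p : M₂,
      Function.Injective (mfderiv (𝓡 d₂) 𝓘(ℝ, EuclideanSpace ℝ (Fin D)) Ψ₂ p))
    (Mset : Set (EuclideanSpace ℝ (Fin D)))
    (hM₁ : Ψ₁ '' Set.univ = Mset) (hM₂ : Ψ₂ '' Set.univ = Mset)
    (x : EuclideanSpace ℝ (Fin D)) (hx : x ∈ Mset) :
    (⋃ x₀ ∈ Ψ₁ ⁻¹' {x},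
        ((LinearMap.range (mfderiv (𝓡 d₁) 𝓘(ℝ, EuclideanSpace ℝ (Fin D)) Ψ₁ x₀).toLinearMap :
          Submodule ℝ (EuclideanSpace ℝ (Fin D))) : Set (EuclideanSpace ℝ (Fin D))))
      = (⋃ x₀ ∈ Ψ₂ ⁻¹' {x},
        ((LinearMap.range (mfderiv (𝓡 d₂) 𝓘(ℝ, EuclideanSpace ℝ (Fin D)) Ψ₂ x₀).toLinearMap :
          Submodule ℝ (EuclideanSpace ℝ (Fin D))) : Set (EuclideanSpace ℝ (Fin D)))) ∧
    (⋃ x₀ ∈ Ψ₁ ⁻¹' {x},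
        ((LinearMap.range (mfderiv (𝓡 d₁) 𝓘(ℝ, EuclideanSpace ℝ (Fin D)) Ψ₁ x₀).toLinearMap :
          Submodule ℝ (EuclideanSpace ℝ (Fin D))) : Set (EuclideanSpace ℝ (Fin D))))
      = {0} ∪ {v : EuclideanSpace ℝ (Fin D) | ∀ ε > 0,
          ∃ y ∈ Mset ∩ Metric.ball x ε, y ≠ x ∧
            ‖‖y - x‖⁻¹ • (y - x) - ‖v‖⁻¹ • v‖ < ε} :=
  stmt_19_general Ψ₁ Ψ₂ hΨ₁ hΨ₂ himm₁ himm₂ Mset hM₁ hM₂ x hx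
end
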